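/- arXiv:2407.17444 — 10 statements merged into one kernel-verified Lean document; each statement's English description precedes it below -/
import Mathlib

section
/- Let f : T → T' be a max-surjective morphism of closed trees. Then f sends every maximal element of T to a maximal element of T', and the restriction of f to the set of maximal elements of T is a bijection onto the set of maximal elements of T'. -/
open CategoryTheory

/-- A closed tree: a finite poset with a least element (the root) in which the set of
elements below any given element is linearly ordered. -/
structure ClosedTree where
  carrier : Type
  [po : PartialOrder carrier]
  [fin : Finite carrier]
  root : carrier
  root_le : ∀ x, root ≤ x
  below_linear : ∀ x y z : carrier, y ≤ x → z ≤ x → y ≤ z ∨ z ≤ y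

attribute [instance] ClosedTree.po ClosedTree.fin

namespace ClosedTree

/-- Two edges are independent if they are incomparable. -/
def Indep (T : ClosedTree) (x y : T.carrier) : Prop :=
  ¬ x ≤ y ∧ ¬ y ≤ x

/-- A morphism of closed trees: a monotone map preserving independence. -/
@[ext]
structure Hom (T T' : ClosedTree) where
  toFun : T.carrier → T'.carrier
  mono : Monotone toFun
  indep : ∀ x y, T.Indep x y → T'.Indep (toFun x) (toFun y)

/-- The category `Ω^c` of closed trees. -/
instance : Category ClosedTree where
  Hom := Hom
  id _ := ⟨_root_.id, monotone_id, fun _ _ h => h⟩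
  comp f g := ⟨g.toFun ∘ f.toFun, g.mono.comp f.mono, fun x y h => g.indep _ _ (f.indep x y h)⟩
  id_comp _ := rfl
  comp_id _ := rfl
  assoc _ _ _ := rfl

/-- A morphism of closed trees is max-surjective if every maximal element of the
target is in the image. -/
def MaxSurj {T T' : ClosedTree} (f : Hom T T') : Prop :=
  ∀ m : T'.carrier, IsMax m → ∃ e : T.carrier, f.toFun e = m

/-- A morphism of closed trees is rooted if it sends the root to the root. -/
def Rooted {T T' : ClosedTree} (f : Hom T T') : Prop :=
  f.toFun T.root = T'.root

/-- A morphism of closed trees is a subtree inclusion if it is injective with convex image. -/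
def SubtreeIncl {T T' : ClosedTree} (f : Hom T T') : Prop :=
  Function.Injective f.toFun ∧
  ∀ (a b : T.carrier) (y : T'.carrier), f.toFun a ≤ y → y ≤ f.toFun b → y ∈ Set.range f.toFun

/-- The valence of an edge: the number of minimal elements of `{x | e < x}`. -/
noncomputable def valence (T : ClosedTree) (e : T.carrier) : ℕ :=
  Set.ncard {x : T.carrier | Minimal (fun y => e < y) x}

/-- A closed tree is `k`-dendroidal if every edge has valence at most `k`. -/
def IsDendroidal (k : ℕ∞) (T : ClosedTree) : Prop :=
  ∀ e : T.carrier, (T.valence e : ℕ∞) ≤ k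

end ClosedTree

open ClosedTree in
/-- A max-surjective morphism of closed trees sends maximal elements to
maximal elements, and restricts to a bijection between the sets of maximal elements. -/
theorem maxSurj_bijOn_maximal (T T' : ClosedTree) (f : ClosedTree.Hom T T')
    (hf : MaxSurj f) :
    (∀ x : T.carrier, IsMax x → IsMax (f.toFun x)) ∧
    Set.BijOn f.toFun {x : T.carrier | IsMax x} {y : T'.carrier | IsMax y} := by
  have key : ∀ e : T.carrier, ∃ x : T.carrier, e ≤ x ∧ IsMax x := by
    intro e
    have hfin : ({x : T.carrier | e ≤ x}).Finite := Set.toFinite _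
    obtain ⟨a, ha, hmax⟩ := Set.Finite.exists_maximalFor id _ hfin ⟨e, le_refl e⟩
    exact ⟨a, ha, fun b hab => hmax (le_trans ha hab) hab⟩
  have hmapsto : ∀ x : T.carrier, IsMax x → IsMax (f.toFun x) := by
    intro x hx
    have key' : ∃ m : T'.carrier, f.toFun x ≤ m ∧ IsMax m := by
      have hfin : ({m : T'.carrier | f.toFun x ≤ m}).Finite := Set.toFinite _
      obtain ⟨a, ha, hmax⟩ := Set.Finite.exists_maximalFor id _ hfin ⟨f.toFun x, le_refl _⟩
      exact ⟨a, ha, fun b hab => hmax (le_trans ha hab) hab⟩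
    obtain ⟨m, hfm, hm⟩ := key'
    obtain ⟨e, he⟩ := hf m hm
    rcases T.below_linear x x x le_rfl le_rfl with _ | _
    · by_cases hxe : x ≤ e
      · have : x = e := le_antisymm hxe (hx hxe)
        rw [this, he]; exact hm
      · by_cases hex : e ≤ x
        · have : m ≤ f.toFun x := he ▸ f.mono hex
          have : f.toFun x = m := le_antisymm hfm this
          rw [this]; exact hm
        · have := f.indep x e ⟨hxe, hex⟩
          exact absurd (he ▸ hfm) this.1
    · by_cases hxe : x ≤ e
      · have : x = e := le_antisymm hxe (hx hxe)
        rw [this, he]; exact hm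
      · by_cases hex : e ≤ x
        · have : m ≤ f.toFun x := he ▸ f.mono hex
          have : f.toFun x = m := le_antisymm hfm this
          rw [this]; exact hm
        · have := f.indep x e ⟨hxe, hex⟩
          exact absurd (he ▸ hfm) this.1
  refine ⟨hmapsto, ⟨fun x hx => hmapsto x hx, ?_, ?_⟩⟩
  · intro x hx y hy hxy
    by_contra hne
    have hind : T.Indep x y := by
      constructor
      · intro h; exact hne (le_antisymm h (hx h))
      · intro h; exact hne (le_antisymm (hy h) h)
    exact (f.indep x y hind).1 (le_of_eq hxy)
  · intro m hm
    obtain ⟨e, he⟩ := hf m hm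
    obtain ⟨x, hex, hx⟩ := key e
    refine ⟨x, hx, ?_⟩
    have : m ≤ f.toFun x := he ▸ f.mono hex
    exact (hm this).antisymm this
end

section
/- Every morphism f : T → T' in the category Ω^c of closed trees factors as f = h ∘ g where g : T → X is max-surjective and h : X → T' is a rooted subtree inclusion; moreover this factorization is unique up to unique isomorphism: if f = h' ∘ g' is another such factorization through X', there is a unique isomorphism u : X → X' with u ∘ g = g' and h' ∘ u = h. (Thus (max-surjective, rooted subtree inclusion) is a factorization system on Ω^c.) -/
open CategoryTheory

section Aux
open ClosedTree

/-- A subtree inclusion reflects the order. -/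
lemma reflect_le {X Y : ClosedTree} (h : Hom X Y) (hs : SubtreeIncl h)
    {a b : X.carrier} (hab : h.toFun a ≤ h.toFun b) : a ≤ b := by
  by_cases h1 : a ≤ b
  · exact h1
  by_cases h2 : b ≤ a
  · exact (hs.1 (le_antisymm hab (h.mono h2))).le
  · exact absurd hab (h.indep a b ⟨h1, h2⟩).1

/-- The range of the subtree-inclusion part of a factorization is the
down-closure of the image of `f`. -/
lemma range_eq {T T' X : ClosedTree} (f : T ⟶ T') (g : T ⟶ X) (h : X ⟶ T')
    (hg : MaxSurj g) (hs : SubtreeIncl h) (hr : Rooted h) (hfact : g ≫ h = f) :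
    Set.range h.toFun = {y : T'.carrier | ∃ e, y ≤ f.toFun e} := by
  have hfe : ∀ e : T.carrier, h.toFun (g.toFun e) = f.toFun e := fun e =>
    congrArg (fun (k : T ⟶ T') => k.toFun e) hfact
  ext y
  constructor
  · rintro ⟨x, rfl⟩
    obtain ⟨m, hxm, hm⟩ := Finite.exists_le_maximal (p := fun _ : X.carrier => True) trivial
    have hmax : IsMax m := fun c hc => hm.2 trivial hc
    obtain ⟨e, he⟩ := hg m hmax
    exact ⟨e, by rw [← hfe]; exact h.mono (he ▸ hxm)⟩
  · rintro ⟨e, hye⟩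
    have : h.toFun X.root ≤ y := by rw [hr]; exact T'.root_le y
    exact hs.2 X.root (g.toFun e) y this (by rw [hfe]; exact hye)

end Aux

open ClosedTree in
/-- every morphism of closed trees factors as a max-surjective morphism
followed by a rooted subtree inclusion, uniquely up to unique isomorphism. -/
theorem maxSurj_rootedSubtreeIncl_factorization (T T' : ClosedTree) (f : T ⟶ T') :
    (∃ (X : ClosedTree) (g : T ⟶ X) (h : X ⟶ T'),
      MaxSurj g ∧ SubtreeIncl h ∧ Rooted h ∧ g ≫ h = f) ∧
    (∀ (X X' : ClosedTree) (g : T ⟶ X) (h : X ⟶ T') (g' : T ⟶ X') (h' : X' ⟶ T'),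
      MaxSurj g → SubtreeIncl h → Rooted h → g ≫ h = f →
      MaxSurj g' → SubtreeIncl h' → Rooted h' → g' ≫ h' = f →
      ∃! u : X ⟶ X',
        (∃ v : X' ⟶ X, u ≫ v = 𝟙 X ∧ v ≫ u = 𝟙 X') ∧ g ≫ u = g' ∧ u ≫ h' = h) := by
  classical
  constructor
  · -- existence
    set D := {y : T'.carrier | ∃ e, y ≤ f.toFun e} with hD
    let X : ClosedTree :=
      { carrier := {y : T'.carrier // y ∈ D}
        root := ⟨T'.root, T.root, T'.root_le _⟩
        root_le := fun x => T'.root_le x.1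
        below_linear := fun x y z hy hz => T'.below_linear x.1 y.1 z.1 hy hz }
    let g : T ⟶ X :=
      { toFun := fun e => ⟨f.toFun e, e, le_refl _⟩
        mono := fun a b hab => f.mono hab
        indep := fun x y hxy => f.indep x y hxy }
    let h : X ⟶ T' :=
      { toFun := fun x => x.1
        mono := fun a b hab => hab
        indep := fun x y hxy => hxy }
    refine ⟨X, g, h, ?_, ⟨fun a b hab => Subtype.ext hab, ?_⟩, rfl, rfl⟩
    · rintro ⟨m, e, hme⟩ hm
      refine ⟨e, ?_⟩
      have : (⟨m, e, hme⟩ : X.carrier) ≤ g.toFun e := hme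
      exact (hm.eq_of_le this).symm
    · rintro ⟨a, ha⟩ ⟨b, eb, hb⟩ y hay hyb
      exact ⟨⟨y, eb, le_trans hyb hb⟩, rfl⟩
  · -- uniqueness
    intro X X' g h g' h' hg hs hr hfact hg' hs' hr' hfact'
    have hfe : ∀ e : T.carrier, h.toFun (g.toFun e) = f.toFun e := fun e =>
      congrArg (fun (k : T ⟶ T') => k.toFun e) hfact
    have hfe' : ∀ e : T.carrier, h'.toFun (g'.toFun e) = f.toFun e := fun e =>
      congrArg (fun (k : T ⟶ T') => k.toFun e) hfact'
    have hrange : Set.range h.toFun = Set.range h'.toFun := by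
      rw [range_eq f g h hg hs hr hfact, range_eq f g' h' hg' hs' hr' hfact']
    -- construct u
    have hmem : ∀ x : X.carrier, h.toFun x ∈ Set.range h'.toFun := fun x =>
      hrange ▸ Set.mem_range_self x
    have hmem' : ∀ x : X'.carrier, h'.toFun x ∈ Set.range h.toFun := fun x =>
      hrange.symm ▸ Set.mem_range_self x
    choose u0 hu0 using hmem
    choose v0 hv0 using hmem'
    have umono : Monotone u0 := fun a b hab =>
      reflect_le h' hs' (by rw [hu0, hu0]; exact h.mono hab)
    have vmono : Monotone v0 := fun a b hab =>
      reflect_le h hs (by rw [hv0, hv0]; exact h'.mono hab)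
    have uindep : ∀ x y, X.Indep x y → X'.Indep (u0 x) (u0 y) := by
      intro x y hxy
      constructor
      · intro hle
        exact hxy.1 (reflect_le h hs (by rw [← hu0 x, ← hu0 y]; exact h'.mono hle))
      · intro hle
        exact hxy.2 (reflect_le h hs (by rw [← hu0 x, ← hu0 y]; exact h'.mono hle))
    have vindep : ∀ x y, X'.Indep x y → X.Indep (v0 x) (v0 y) := by
      intro x y hxy
      constructor
      · intro hle
        exact hxy.1 (reflect_le h' hs' (by rw [← hv0 x, ← hv0 y]; exact h.mono hle))
      · intro hle
        exact hxy.2 (reflect_le h' hs' (by rw [← hv0 x, ← hv0 y]; exact h.mono hle))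
    let u : X ⟶ X' := ⟨u0, umono, uindep⟩
    let v : X' ⟶ X := ⟨v0, vmono, vindep⟩
    refine ⟨u, ⟨⟨v, ?_, ?_⟩, ?_, ?_⟩, ?_⟩
    · apply Hom.ext; funext x
      exact hs.1 (by show h.toFun (v0 (u0 x)) = h.toFun x; rw [hv0, hu0])
    · apply Hom.ext; funext x
      exact hs'.1 (by show h'.toFun (u0 (v0 x)) = h'.toFun x; rw [hu0, hv0])
    · apply Hom.ext; funext e
      apply hs'.1
      show h'.toFun (u0 (g.toFun e)) = h'.toFun (g'.toFun e)
      rw [hu0, hfe, hfe']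
    · apply Hom.ext; funext x
      exact hu0 x
    · rintro w ⟨-, -, hw⟩
      apply Hom.ext; funext x
      have := congrArg (fun (k : X ⟶ T') => k.toFun x) hw
      exact hs'.1 (by show h'.toFun (w.toFun x) = h'.toFun (u0 x); rw [hu0]; exact this)
end

section
/- Every morphism f : T → T' in the category Ω^c of closed trees factors as f = h ∘ g where g : T → X is rooted and max-surjective and h : X → T' is a subtree inclusion; moreover this factorization is unique up to unique isomorphism: if f = h' ∘ g' is another such factorization through X', there is a unique isomorphism u : X → X' with u ∘ g = g' and h' ∘ u = h. (Thus (rooted max-surjective, subtree inclusion) is a factorization system on Ω^c.) -/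
open CategoryTheory

open ClosedTree

private lemma Hom.reflect_le {A B : ClosedTree} (f : Hom A B)
    (hinj : Function.Injective f.toFun) {a b : A.carrier}
    (hle : f.toFun a ≤ f.toFun b) : a ≤ b := by
  by_cases hab : a ≤ b
  · exact hab
  by_cases hba : b ≤ a
  · exact le_of_eq (hinj (le_antisymm hle (f.mono hba)))
  exact absurd hle (f.indep a b ⟨hab, hba⟩).1

private lemma exists_le_isMax {A : ClosedTree} (a : A.carrier) :
    ∃ m : A.carrier, a ≤ m ∧ IsMax m := by
  obtain ⟨b, hab, hb⟩ := Finite.exists_le_maximal (p := fun _ : A.carrier => True) trivial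
  exact ⟨b, hab, fun y hy => hb.2 trivial hy⟩

private lemma range_char {T T' X : ClosedTree} (f : T ⟶ T') (g : T ⟶ X) (h : X ⟶ T')
    (hg : Rooted g) (hgm : MaxSurj g) (hh : SubtreeIncl h) (hfac : g ≫ h = f) :
    Set.range h.toFun = {y | f.toFun T.root ≤ y ∧ ∃ t, y ≤ f.toFun t} := by
  have hcomp : ∀ t, h.toFun (g.toFun t) = f.toFun t := fun t =>
    congrFun (congrArg Hom.toFun hfac) t
  ext y
  constructor
  · rintro ⟨x, rfl⟩
    obtain ⟨m, hxm, hm⟩ := exists_le_isMax x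
    obtain ⟨t, ht⟩ := hgm m hm
    refine ⟨?_, t, ?_⟩
    · rw [← hcomp T.root, hg]; exact h.mono (X.root_le x)
    · rw [← hcomp t, ht]; exact h.mono hxm
  · rintro ⟨h1, t, h2⟩
    refine hh.2 X.root (g.toFun t) y ?_ ?_
    · rw [← hg, hcomp]; exact h1
    · rw [hcomp t]; exact h2

private lemma exists_connecting {T T' : ClosedTree} (f : T ⟶ T') (X X' : ClosedTree)
    (g : T ⟶ X) (h : X ⟶ T') (g' : T ⟶ X') (h' : X' ⟶ T')
    (hg : Rooted g) (hgm : MaxSurj g) (hh : SubtreeIncl h) (hfac : g ≫ h = f)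
    (hg' : Rooted g') (hgm' : MaxSurj g') (hh' : SubtreeIncl h') (hfac' : g' ≫ h' = f) :
    ∃ u : X ⟶ X', g ≫ u = g' ∧ u ≫ h' = h := by
  classical
  have hr : Set.range h.toFun = Set.range h'.toFun := by
    rw [range_char f g h hg hgm hh hfac, range_char f g' h' hg' hgm' hh' hfac']
  have hex : ∀ x : X.carrier, ∃ x' : X'.carrier, h'.toFun x' = h.toFun x := by
    intro x
    have : h.toFun x ∈ Set.range h'.toFun := hr ▸ Set.mem_range_self x
    exact this
  choose φ hφ using hex
  have hmono : Monotone φ := fun a b hab =>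
    Hom.reflect_le h' hh'.1 (by rw [hφ a, hφ b]; exact h.mono hab)
  have hindep : ∀ x y, X.Indep x y → X'.Indep (φ x) (φ y) := by
    intro x y hxy
    have hI := h.indep x y hxy
    constructor
    · intro hle
      exact hI.1 (by rw [← hφ x, ← hφ y]; exact h'.mono hle)
    · intro hle
      exact hI.2 (by rw [← hφ x, ← hφ y]; exact h'.mono hle)
  refine ⟨⟨φ, hmono, hindep⟩, ?_, ?_⟩
  · apply Hom.ext; funext t
    apply hh'.1
    show h'.toFun (φ (g.toFun t)) = h'.toFun (g'.toFun t)
    rw [hφ]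
    exact (congrFun (congrArg Hom.toFun hfac) t).trans
      (congrFun (congrArg Hom.toFun hfac') t).symm
  · apply Hom.ext; funext x
    exact hφ x

open ClosedTree in
/-- every morphism of closed trees factors as a rooted max-surjective
morphism followed by a subtree inclusion, uniquely up to unique isomorphism. -/
theorem rootedMaxSurj_subtreeIncl_factorization (T T' : ClosedTree) (f : T ⟶ T') :
    (∃ (X : ClosedTree) (g : T ⟶ X) (h : X ⟶ T'),
      Rooted g ∧ MaxSurj g ∧ SubtreeIncl h ∧ g ≫ h = f) ∧
    (∀ (X X' : ClosedTree) (g : T ⟶ X) (h : X ⟶ T') (g' : T ⟶ X') (h' : X' ⟶ T'),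
      Rooted g → MaxSurj g → SubtreeIncl h → g ≫ h = f →
      Rooted g' → MaxSurj g' → SubtreeIncl h' → g' ≫ h' = f →
      ∃! u : X ⟶ X',
        (∃ v : X' ⟶ X, u ≫ v = 𝟙 X ∧ v ≫ u = 𝟙 X') ∧ g ≫ u = g' ∧ u ≫ h' = h) := by
  constructor
  · -- existence
    set S : Set T'.carrier := {y | f.toFun T.root ≤ y ∧ ∃ t, y ≤ f.toFun t} with hS
    let X : ClosedTree :=
      { carrier := {y : T'.carrier // y ∈ S}
        root := ⟨f.toFun T.root, le_refl _, T.root, f.mono (T.root_le T.root)⟩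
        root_le := fun x => x.2.1
        below_linear := fun x y z hy hz =>
          T'.below_linear x.1 y.1 z.1 hy hz }
    have gindep : ∀ x y, T.Indep x y →
        X.Indep ⟨f.toFun x, f.mono (T.root_le x), x, le_refl _⟩
          ⟨f.toFun y, f.mono (T.root_le y), y, le_refl _⟩ := by
      intro x y hxy
      exact f.indep x y hxy
    let g : T ⟶ X :=
      { toFun := fun t => ⟨f.toFun t, f.mono (T.root_le t), t, le_refl _⟩
        mono := fun a b hab => f.mono hab
        indep := gindep }
    let h : X ⟶ T' :=
      { toFun := Subtype.val
        mono := fun a b hab => hab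
        indep := fun x y hxy => hxy }
    refine ⟨X, g, h, rfl, ?_, ⟨Subtype.val_injective, ?_⟩, ?_⟩
    · -- max surjective
      rintro ⟨m, hm1, t, hm2⟩ hmax
      refine ⟨t, ?_⟩
      have hle : (⟨m, hm1, t, hm2⟩ : X.carrier) ≤
          ⟨f.toFun t, f.mono (T.root_le t), t, le_refl _⟩ := hm2
      exact (le_antisymm (hmax hle) hle).symm ▸ rfl
    · -- convexity
      rintro ⟨a, ha⟩ ⟨b, hb1, tb, hb2⟩ y hay hyb
      exact ⟨⟨y, le_trans ha.1 hay, tb, le_trans hyb hb2⟩, rfl⟩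
    · apply Hom.ext; funext t; rfl
  · -- uniqueness
    intro X X' g h g' h' hg hgm hh hfac hg' hgm' hh' hfac'
    obtain ⟨u, hu1, hu2⟩ :=
      exists_connecting f X X' g h g' h' hg hgm hh hfac hg' hgm' hh' hfac'
    obtain ⟨v, hv1, hv2⟩ :=
      exists_connecting f X' X g' h' g h hg' hgm' hh' hfac' hg hgm hh hfac
    have huv : u ≫ v = 𝟙 X := by
      apply Hom.ext; funext x
      apply hh.1
      show h.toFun (v.toFun (u.toFun x)) = h.toFun x
      calc h.toFun (v.toFun (u.toFun x)) = h'.toFun (u.toFun x) :=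
            congrFun (congrArg Hom.toFun hv2) (u.toFun x)
        _ = h.toFun x := congrFun (congrArg Hom.toFun hu2) x
    have hvu : v ≫ u = 𝟙 X' := by
      apply Hom.ext; funext x
      apply hh'.1
      show h'.toFun (u.toFun (v.toFun x)) = h'.toFun x
      calc h'.toFun (u.toFun (v.toFun x)) = h.toFun (v.toFun x) :=
            congrFun (congrArg Hom.toFun hu2) (v.toFun x)
        _ = h'.toFun x := congrFun (congrArg Hom.toFun hv2) x
    refine ⟨u, ⟨⟨v, huv, hvu⟩, hu1, hu2⟩, ?_⟩
    rintro w ⟨-, -, hw2⟩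
    apply Hom.ext; funext x
    apply hh'.1
    show h'.toFun (w.toFun x) = h'.toFun (u.toFun x)
    calc h'.toFun (w.toFun x) = h.toFun x := congrFun (congrArg Hom.toFun hw2) x
      _ = h'.toFun (u.toFun x) := (congrFun (congrArg Hom.toFun hu2) x).symm
end

section
/- Every morphism f : T → T' in the category Ω^c of closed trees factors as f = f₃ ∘ f₂ ∘ f₁ where f₁ is rooted and max-surjective, f₂ is a subtree inclusion which is max-surjective, and f₃ is a rooted subtree inclusion; this factorization is unique up to unique isomorphisms of the two intermediate objects. -/
open CategoryTheory

namespace ClosedTree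

lemma exists_le_isMax {T : ClosedTree} (a : T.carrier) : ∃ m, a ≤ m ∧ IsMax m := by
  obtain ⟨m, hm, hmax⟩ := Set.Finite.exists_maximalFor id {b : T.carrier | a ≤ b}
    (Set.toFinite _) ⟨a, le_rfl⟩
  exact ⟨m, hm, fun c hc => (hmax (le_trans hm hc) hc).ge⟩

lemma Hom.le_reflect {A B : ClosedTree} (h : Hom A B) (hinj : Function.Injective h.toFun)
    {x y : A.carrier} (hle : h.toFun x ≤ h.toFun y) : x ≤ y := by
  by_cases h1 : x ≤ y
  · exact h1
  · by_cases h2 : y ≤ x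
    · exact le_of_eq (hinj (le_antisymm hle (h.mono h2)))
    · exact absurd hle (h.indep x y ⟨h1, h2⟩).1

lemma hom_ext' {A B : ClosedTree} {p q : A ⟶ B} (h : ∀ x, p.toFun x = q.toFun x) : p = q :=
  Hom.ext (funext h)

lemma comp_toFun' {A B C : ClosedTree} (p : A ⟶ B) (q : B ⟶ C) (x : A.carrier) :
    (p ≫ q).toFun x = q.toFun (p.toFun x) := rfl

lemma cancel_inj {A B C : ClosedTree} {p q : A ⟶ B} (g : B ⟶ C)
    (hg : Function.Injective g.toFun) (h : p ≫ g = q ≫ g) : p = q :=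
  hom_ext' fun x => hg (congrArg (fun m => Hom.toFun m x) h)

lemma iso_of_range_eq {A B C : ClosedTree} (p : A ⟶ C) (q : B ⟶ C)
    (hp : Function.Injective p.toFun) (hq : Function.Injective q.toFun)
    (hr : Set.range p.toFun = Set.range q.toFun) :
    ∃ (u : A ⟶ B) (v : B ⟶ A), u ≫ v = 𝟙 A ∧ v ≫ u = 𝟙 B ∧ u ≫ q = p ∧ v ≫ p = q := by
  have hu : ∀ a : A.carrier, ∃ b, q.toFun b = p.toFun a := by
    intro a
    have : p.toFun a ∈ Set.range q.toFun := hr ▸ Set.mem_range_self a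
    exact this
  have hv : ∀ b : B.carrier, ∃ a, p.toFun a = q.toFun b := by
    intro b
    have : q.toFun b ∈ Set.range p.toFun := hr.symm ▸ Set.mem_range_self b
    exact this
  choose uf huf using hu
  choose vf hvf using hv
  have umono : Monotone uf := fun a a' h =>
    q.le_reflect hq (by rw [huf, huf]; exact p.mono h)
  have vmono : Monotone vf := fun b b' h =>
    p.le_reflect hp (by rw [hvf, hvf]; exact q.mono h)
  have uindep : ∀ x y, A.Indep x y → B.Indep (uf x) (uf y) := by
    intro x y hxy
    have h1 := p.indep x y hxy
    rw [← huf x, ← huf y] at h1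
    exact ⟨fun hle => h1.1 (q.mono hle), fun hle => h1.2 (q.mono hle)⟩
  have vindep : ∀ x y, B.Indep x y → A.Indep (vf x) (vf y) := by
    intro x y hxy
    have h1 := q.indep x y hxy
    rw [← hvf x, ← hvf y] at h1
    exact ⟨fun hle => h1.1 (p.mono hle), fun hle => h1.2 (p.mono hle)⟩
  refine ⟨⟨uf, umono, uindep⟩, ⟨vf, vmono, vindep⟩, ?_, ?_, ?_, ?_⟩
  · exact hom_ext' fun a => hp ((hvf (uf a)).trans (huf a))
  · exact hom_ext' fun b => hq ((huf (vf b)).trans (hvf b))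
  · exact hom_ext' fun a => huf a
  · exact hom_ext' fun b => hvf b

lemma ranges_of_fact {T T' Y₁ Y₂ : ClosedTree} (f : T ⟶ T') (g₁ : T ⟶ Y₁) (g₂ : Y₁ ⟶ Y₂)
    (g₃ : Y₂ ⟶ T') (h₁r : Rooted g₁) (h₁m : MaxSurj g₁) (h₂s : SubtreeIncl g₂) (h₂m : MaxSurj g₂)
    (h₃s : SubtreeIncl g₃) (h₃r : Rooted g₃) (hcomp : g₁ ≫ g₂ ≫ g₃ = f) :
    Set.range g₃.toFun = {y | ∃ x, y ≤ f.toFun x} ∧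
    Set.range (g₃.toFun ∘ g₂.toFun) = {y | ∃ a b, f.toFun a ≤ y ∧ y ≤ f.toFun b} := by
  have hc : ∀ x, g₃.toFun (g₂.toFun (g₁.toFun x)) = f.toFun x := fun x =>
    congrArg (fun m => Hom.toFun m x) hcomp
  have hup : ∀ z : Y₁.carrier, ∃ x : T.carrier, g₂.toFun z ≤ g₂.toFun (g₁.toFun x) := by
    intro z
    obtain ⟨m, hzm, hmax⟩ := exists_le_isMax z
    obtain ⟨x, hx⟩ := h₁m m hmax
    exact ⟨x, g₂.mono (by rw [hx]; exact hzm)⟩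
  have hD1 : ∀ y : Y₂.carrier, ∃ x, g₃.toFun y ≤ f.toFun x := by
    intro y
    obtain ⟨m, hym, hmax⟩ := exists_le_isMax y
    obtain ⟨m₁, hm₁⟩ := h₂m m hmax
    obtain ⟨x, hx⟩ := hup m₁
    refine ⟨x, ?_⟩
    rw [← hc x]
    exact g₃.mono (le_trans hym (by rw [← hm₁]; exact hx))
  constructor
  · ext y
    constructor
    · rintro ⟨y', rfl⟩
      exact hD1 y'
    · rintro ⟨x, hyx⟩
      exact h₃s.2 Y₂.root (g₂.toFun (g₁.toFun x)) y
        (by rw [h₃r]; exact T'.root_le y) (by rw [hc]; exact hyx)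
  · ext y
    constructor
    · rintro ⟨z, rfl⟩
      refine ⟨T.root, ?_⟩
      obtain ⟨x, hx⟩ := hup z
      refine ⟨x, ?_, ?_⟩
      · rw [← hc T.root]
        exact g₃.mono (g₂.mono (by rw [h₁r]; exact Y₁.root_le z))
      · rw [← hc x]
        exact g₃.mono hx
    · rintro ⟨a, b, hay, hyb⟩
      have hyD : y ∈ Set.range g₃.toFun := by
        exact h₃s.2 Y₂.root (g₂.toFun (g₁.toFun b)) y
          (by rw [h₃r]; exact T'.root_le y) (by rw [hc]; exact hyb)
      obtain ⟨y', rfl⟩ := hyD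
      have h1 : g₂.toFun (g₁.toFun a) ≤ y' :=
        g₃.le_reflect h₃s.1 (by rw [hc]; exact hay)
      have h2 : y' ≤ g₂.toFun (g₁.toFun b) :=
        g₃.le_reflect h₃s.1 (by rw [hc]; exact hyb)
      obtain ⟨z, rfl⟩ := h₂s.2 (g₁.toFun a) (g₁.toFun b) y' h1 h2
      exact ⟨z, rfl⟩


lemma exists_fact {T T' : ClosedTree} (f : T ⟶ T') :
    ∃ (X₁ X₂ : ClosedTree) (f₁ : T ⟶ X₁) (f₂ : X₁ ⟶ X₂) (f₃ : X₂ ⟶ T'),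
      Rooted f₁ ∧ MaxSurj f₁ ∧ SubtreeIncl f₂ ∧ MaxSurj f₂ ∧ SubtreeIncl f₃ ∧ Rooted f₃ ∧
      f₁ ≫ f₂ ≫ f₃ = f := by
  classical
  let D : Set T'.carrier := {y | ∃ x, y ≤ f.toFun x}
  let H : Set T'.carrier := {y | ∃ a b, f.toFun a ≤ y ∧ y ≤ f.toFun b}
  have hHD : H ⊆ D := by rintro y ⟨a, b, h1, h2⟩; exact ⟨b, h2⟩
  have hrootH : f.toFun T.root ∈ H := ⟨T.root, T.root, le_rfl, le_rfl⟩
  have hrootD : T'.root ∈ D := ⟨T.root, T'.root_le _⟩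
  let X₁ : ClosedTree :=
    { carrier := ↥H
      root := ⟨f.toFun T.root, hrootH⟩
      root_le := by
        rintro ⟨y, a, b, h1, h2⟩
        exact Subtype.mk_le_mk.2 (le_trans (f.mono (T.root_le a)) h1)
      below_linear := fun x y z h1 h2 => T'.below_linear x.1 y.1 z.1 h1 h2 }
  let X₂ : ClosedTree :=
    { carrier := ↥D
      root := ⟨T'.root, hrootD⟩
      root_le := fun y => Subtype.mk_le_mk.2 (T'.root_le y.1)
      below_linear := fun x y z h1 h2 => T'.below_linear x.1 y.1 z.1 h1 h2 }
  let f₁ : T ⟶ X₁ :=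
    { toFun := fun x => ⟨f.toFun x, x, x, le_rfl, le_rfl⟩
      mono := fun a b h => Subtype.mk_le_mk.2 (f.mono h)
      indep := fun x y h => f.indep x y h }
  let f₂ : X₁ ⟶ X₂ :=
    { toFun := Set.inclusion hHD
      mono := fun a b h => h
      indep := fun x y h => h }
  let f₃ : X₂ ⟶ T' :=
    { toFun := Subtype.val
      mono := fun a b h => h
      indep := fun x y h => h }
  refine ⟨X₁, X₂, f₁, f₂, f₃, rfl, ?_, ⟨Set.inclusion_injective hHD, ?_⟩, ?_,
    ⟨Subtype.coe_injective, ?_⟩, rfl, hom_ext' fun x => rfl⟩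
  · -- MaxSurj f₁
    rintro ⟨m, hmH⟩ hmax
    obtain ⟨a, b, h1, h2⟩ := id hmH
    have hfbH : f.toFun b ∈ H := ⟨b, b, le_rfl, le_rfl⟩
    have h3 : (⟨m, hmH⟩ : ↥H) ≤ ⟨f.toFun b, hfbH⟩ := Subtype.mk_le_mk.2 h2
    have h4 := hmax h3
    exact ⟨b, Subtype.ext (le_antisymm (Subtype.mk_le_mk.1 h4) h2)⟩
  · -- SubtreeIncl f₂ convexity
    rintro ⟨a, ha⟩ ⟨b, hb⟩ ⟨y, hyD⟩ h1 h2
    obtain ⟨a₁, a₂, ha1, ha2⟩ := id ha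
    obtain ⟨b₁, b₂, hb1, hb2⟩ := id hb
    have h1' : a ≤ y := h1
    have h2' : y ≤ b := h2
    exact ⟨⟨y, ⟨a₁, b₂, le_trans ha1 h1', le_trans h2' hb2⟩⟩, rfl⟩
  · -- MaxSurj f₂
    rintro ⟨m, hmD⟩ hmax
    obtain ⟨x, hx⟩ := id hmD
    have hfxD : f.toFun x ∈ D := ⟨x, le_rfl⟩
    have h3 : (⟨m, hmD⟩ : ↥D) ≤ ⟨f.toFun x, hfxD⟩ := Subtype.mk_le_mk.2 hx
    have h4 := hmax h3
    exact ⟨⟨m, ⟨x, x, Subtype.mk_le_mk.1 h4, hx⟩⟩, rfl⟩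
  · -- SubtreeIncl f₃ convexity
    rintro ⟨a, ha⟩ ⟨b, hb⟩ y h1 h2
    obtain ⟨x₂, hx₂⟩ := id hb
    have h2' : y ≤ b := h2
    exact ⟨⟨y, ⟨x₂, le_trans h2' hx₂⟩⟩, rfl⟩

end ClosedTree

open ClosedTree in
/-- every morphism of closed trees factors as a rooted max-surjective
morphism, followed by a max-surjective subtree inclusion, followed by a rooted subtree
inclusion, uniquely up to unique isomorphisms of the two intermediate objects. -/
theorem triple_factorization (T T' : ClosedTree) (f : T ⟶ T') :
    (∃ (X₁ X₂ : ClosedTree) (f₁ : T ⟶ X₁) (f₂ : X₁ ⟶ X₂) (f₃ : X₂ ⟶ T'),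
      Rooted f₁ ∧ MaxSurj f₁ ∧ SubtreeIncl f₂ ∧ MaxSurj f₂ ∧ SubtreeIncl f₃ ∧ Rooted f₃ ∧
      f₁ ≫ f₂ ≫ f₃ = f) ∧
    (∀ (X₁ X₂ Y₁ Y₂ : ClosedTree) (f₁ : T ⟶ X₁) (f₂ : X₁ ⟶ X₂) (f₃ : X₂ ⟶ T')
      (g₁ : T ⟶ Y₁) (g₂ : Y₁ ⟶ Y₂) (g₃ : Y₂ ⟶ T'),
      Rooted f₁ → MaxSurj f₁ → SubtreeIncl f₂ → MaxSurj f₂ → SubtreeIncl f₃ → Rooted f₃ →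
      f₁ ≫ f₂ ≫ f₃ = f →
      Rooted g₁ → MaxSurj g₁ → SubtreeIncl g₂ → MaxSurj g₂ → SubtreeIncl g₃ → Rooted g₃ →
      g₁ ≫ g₂ ≫ g₃ = f →
      ∃! u : (X₁ ⟶ Y₁) × (X₂ ⟶ Y₂),
        (∃ v₁ : Y₁ ⟶ X₁, u.1 ≫ v₁ = 𝟙 X₁ ∧ v₁ ≫ u.1 = 𝟙 Y₁) ∧
        (∃ v₂ : Y₂ ⟶ X₂, u.2 ≫ v₂ = 𝟙 X₂ ∧ v₂ ≫ u.2 = 𝟙 Y₂) ∧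
        f₁ ≫ u.1 = g₁ ∧ u.1 ≫ g₂ = f₂ ≫ u.2 ∧ u.2 ≫ g₃ = f₃) := by
  refine ⟨exists_fact f, ?_⟩
  intro X₁ X₂ Y₁ Y₂ f₁ f₂ f₃ g₁ g₂ g₃ hf1r hf1m hf2s hf2m hf3s hf3r hfc
    hg1r hg1m hg2s hg2m hg3s hg3r hgc
  obtain ⟨hfD, hfH⟩ := ranges_of_fact f f₁ f₂ f₃ hf1r hf1m hf2s hf2m hf3s hf3r hfc
  obtain ⟨hgD, hgH⟩ := ranges_of_fact f g₁ g₂ g₃ hg1r hg1m hg2s hg2m hg3s hg3r hgc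
  have hinj23 : Function.Injective (f₂ ≫ f₃).toFun := hf3s.1.comp hf2s.1
  have ginj23 : Function.Injective (g₂ ≫ g₃).toFun := hg3s.1.comp hg2s.1
  obtain ⟨u₁, v₁, huv₁, hvu₁, huq₁, hvp₁⟩ := iso_of_range_eq (f₂ ≫ f₃) (g₂ ≫ g₃) hinj23 ginj23
    (by show Set.range (f₃.toFun ∘ f₂.toFun) = Set.range (g₃.toFun ∘ g₂.toFun); rw [hfH, hgH])
  obtain ⟨u₂, v₂, huv₂, hvu₂, huq₂, hvp₂⟩ := iso_of_range_eq f₃ g₃ hf3s.1 hg3s.1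
    (by rw [hfD, hgD])
  refine ⟨(u₁, u₂), ⟨⟨v₁, huv₁, hvu₁⟩, ⟨v₂, huv₂, hvu₂⟩, ?_, ?_, huq₂⟩, ?_⟩
  · apply cancel_inj (g₂ ≫ g₃) ginj23
    rw [Category.assoc, huq₁, hfc, hgc]
  · apply cancel_inj g₃ hg3s.1
    rw [Category.assoc, Category.assoc, huq₂]
    exact huq₁
  · rintro ⟨w₁, w₂⟩ ⟨-, -, hw1, hw2, hw3⟩
    have e2 : w₂ = u₂ := cancel_inj g₃ hg3s.1 (hw3.trans huq₂.symm)
    have e1 : w₁ = u₁ := by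
      apply cancel_inj (g₂ ≫ g₃) ginj23
      have h5 : w₁ ≫ g₂ ≫ g₃ = f₂ ≫ f₃ := by
        rw [← Category.assoc, hw2, e2, Category.assoc, huq₂]
      exact h5.trans huq₁.symm
    rw [e1, e2]
end

section
/- Let 1 ≤ k ≤ ∞ and let f : K → K' be a max-surjective morphism of closed trees. If K is a k-dendroidal tree, then K' is also a k-dendroidal tree. -/
open CategoryTheory

open ClosedTree in
/-- if `f : K ⟶ K'` is a max-surjective morphism of closed trees and `K` is
`k`-dendroidal, then so is `K'`. -/
theorem isDendroidal_of_maxSurj (k : ℕ∞) (hk : 1 ≤ k) (K K' : ClosedTree)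
    (f : ClosedTree.Hom K K') (hf : MaxSurj f) (hK : IsDendroidal k K) :
    IsDendroidal k K' := by
  intro e'
  classical
  set S : Set K'.carrier := {x | Minimal (fun y => e' < y) x} with hS
  -- comparability helper in K'
  have cmp' : ∀ a b c : K'.carrier, a ≤ c → b ≤ c → a ≤ b ∨ b ≤ a := fun a b c h1 h2 =>
    K'.below_linear c a b h1 h2
  have cmpK : ∀ a b c : K.carrier, a ≤ c → b ≤ c → a ≤ b ∨ b ≤ a := fun a b c h1 h2 =>
    K.below_linear c a b h1 h2
  -- comparability via independence preservation
  have comp_of_img : ∀ a b : K.carrier, (f.toFun a ≤ f.toFun b ∨ f.toFun b ≤ f.toFun a) →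
      a ≤ b ∨ b ≤ a := by
    intro a b h
    by_contra hc
    push_neg at hc
    exact absurd h (by simpa [ClosedTree.Indep, not_or] using f.indep a b ⟨hc.1, hc.2⟩)
  -- existence of a_x : minimal preimage-above
  have key : ∀ x : K'.carrier, ∃ a : K.carrier,
      x ∈ S → Minimal (fun a => x ≤ f.toFun a) a := by
    intro x
    by_cases hx : x ∈ S
    · obtain ⟨m, hxm, hm⟩ := Finite.exists_le_maximal (p := fun y => x ≤ y) le_rfl
      obtain ⟨e, he⟩ := hf m (by intro y hy; exact hm.2 (hm.1.trans hy) hy)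
      obtain ⟨a, -, ha⟩ := Finite.exists_le_minimal (p := fun a => x ≤ f.toFun a)
        (a := e) (show x ≤ f.toFun e from he ▸ hxm)
      exact ⟨a, fun _ => ha⟩
    · exact ⟨K.root, fun h => absurd h hx⟩
  choose a ha using key
  -- e' < f (a x)
  have hfa : ∀ x ∈ S, e' < f.toFun (a x) := fun x hx =>
    lt_of_lt_of_le hx.1 ((ha x hx).1)
  -- a x is minimal in {b | e' < f b}
  have hamin : ∀ x ∈ S, ∀ b : K.carrier, e' < f.toFun b → b ≤ a x → b = a x := by
    intro x hx b hb hba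
    have h1 : f.toFun b ≤ f.toFun (a x) := f.mono hba
    have h2 : x ≤ f.toFun (a x) := (ha x hx).1
    have : x ≤ f.toFun b ∨ f.toFun b ≤ x := cmp' _ _ _ h2 h1
    have hxb : x ≤ f.toFun b := by
      rcases this with h | h
      · exact h
      · exact hx.2 hb h
    exact le_antisymm hba ((ha x hx).2 hxb hba)
  -- injectivity of a on S
  have hinj : Set.InjOn a S := by
    intro x hx y hy hxy
    have h1 : x ≤ f.toFun (a x) := (ha x hx).1
    have h2 : y ≤ f.toFun (a x) := hxy ▸ (ha y hy).1
    rcases cmp' _ _ _ h1 h2 with h | h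
    · exact le_antisymm h (hy.2 hx.1 h)
    · exact le_antisymm (hx.2 hy.1 h) h
  have hSfin : S.Finite := Set.toFinite _
  by_cases hroot : f.toFun K.root ≤ e'
  · -- main case: find common parent c
    have keyc : ∀ x : K'.carrier, ∃ c : K.carrier,
        x ∈ S → Maximal (fun b => b ≤ a x ∧ f.toFun b ≤ e') c := by
      intro x
      obtain ⟨c, -, hc⟩ := Finite.exists_le_maximal
        (p := fun b => b ≤ a x ∧ f.toFun b ≤ e') (a := K.root) ⟨K.root_le _, hroot⟩
      exact ⟨c, fun _ => hc⟩
    choose c hc using keyc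
    -- a x is a minimal element of {y | c x < y}
    have hchild : ∀ x ∈ S, Minimal (fun y => c x < y) (a x) := by
      intro x hx
      have hcle : c x ≤ a x := (hc x hx).1.1
      have hcfe : f.toFun (c x) ≤ e' := (hc x hx).1.2
      have hclt : c x < a x := lt_of_le_of_ne hcle (by
        intro heq
        rw [heq] at hcfe
        exact absurd hcfe (not_le_of_gt (hfa x hx)))
      refine ⟨hclt, fun b hb hba => ?_⟩
      -- b with c x < b, b ≤ a x ; show a x ≤ b
      have h1 : f.toFun b ≤ f.toFun (a x) := f.mono hba
      rcases cmp' e' (f.toFun b) (f.toFun (a x)) (le_of_lt (hfa x hx)) h1 with h | h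
      · rcases lt_or_eq_of_le h with h' | h'
        · exact (hamin x hx b h' hba).ge
        · exact absurd ((hc x hx).2 ⟨hba, h'.symm.le⟩ hb.le) (not_le_of_gt hb)
      · exact absurd ((hc x hx).2 ⟨hba, h⟩ hb.le) (not_le_of_gt hb)
    -- all c x are equal on S
    have hceq : ∀ x ∈ S, ∀ y ∈ S, c x ≤ c y := by
      intro x hx y hy
      have hcfx : f.toFun (c x) ≤ e' := (hc x hx).1.2
      have hcfy : f.toFun (c y) ≤ e' := (hc y hy).1.2
      -- c x comparable with a y
      have h1 : f.toFun (c x) ≤ f.toFun (a y) ∨ f.toFun (a y) ≤ f.toFun (c x) :=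
        Or.inl (hcfx.trans (le_of_lt (hfa y hy)))
      rcases comp_of_img _ _ h1 with h2 | h2
      · -- c x ≤ a y, so c x is in the set for y; compare c x and c y
        have h3 : c x ≤ c y ∨ c y ≤ c x := by
          apply comp_of_img
          exact cmp' _ _ _ hcfx hcfy
        rcases h3 with h | h
        · exact h
        · exact (hc y hy).2 ⟨h2, hcfx⟩ h
      · exact absurd (lt_of_lt_of_le (hfa y hy) (f.mono h2)) (not_lt_of_ge hcfx)
    -- now bound ncard
    rcases S.eq_empty_or_nonempty with hSe | ⟨x₀, hx₀⟩
    · show ((Set.ncard S : ℕ) : ℕ∞) ≤ k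
      rw [hSe]
      simp
    · have hmaps : Set.MapsTo a S {y | Minimal (fun z => c x₀ < z) y} := by
        intro x hx
        have : c x = c x₀ := le_antisymm (hceq x hx x₀ hx₀) (hceq x₀ hx₀ x hx)
        exact this ▸ hchild x hx
      have hcard : Set.ncard S ≤ K.valence (c x₀) :=
        Set.ncard_le_ncard_of_injOn a hmaps hinj (Set.toFinite _)
      calc ((Set.ncard S : ℕ) : ℕ∞) ≤ (K.valence (c x₀) : ℕ∞) := by
            exact_mod_cast hcard
        _ ≤ k := hK _
  · -- degenerate case: e' < f root, S is a subsingleton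
    have hsub : S.Subsingleton := by
      intro x hx y hy
      have hrx : K.root ≤ a x := K.root_le _
      have h1 : x ≤ f.toFun (a x) := (ha x hx).1
      have h2 : f.toFun K.root ≤ f.toFun (a x) := f.mono hrx
      -- e' comparable with f root
      have h3 : e' ≤ f.toFun K.root := by
        rcases cmp' e' (f.toFun K.root) (f.toFun (a x)) (le_of_lt (hfa x hx)) h2 with h | h
        · exact h
        · exact absurd h hroot
      have h4 : e' < f.toFun K.root := lt_of_le_of_ne h3 (fun h => hroot h.ge)
      -- x ≤ f root and y ≤ f root
      have hle : ∀ z ∈ S, z ≤ f.toFun K.root := by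
        intro z hz
        have hz1 : z ≤ f.toFun (a z) := (ha z hz).1
        have hz2 : f.toFun K.root ≤ f.toFun (a z) := f.mono (K.root_le _)
        rcases cmp' z (f.toFun K.root) (f.toFun (a z)) hz1 hz2 with h | h
        · exact h
        · exact hz.2 h4 h
      rcases cmp' x y (f.toFun K.root) (hle x hx) (hle y hy) with h | h
      · exact le_antisymm h (hy.2 hx.1 h)
      · exact le_antisymm (hx.2 hy.1 h) h
    calc ((Set.ncard S : ℕ) : ℕ∞) ≤ (1 : ℕ) := by
          exact_mod_cast (Set.ncard_le_one_iff hSfin).mpr (fun ha hb => hsub ha hb)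
      _ ≤ k := by simpa using hk
end

section
/- Let 1 ≤ k ≤ ∞ and let f : T → T' be a morphism between closed k-dendroidal trees. If f = h ∘ g is a factorization with g : T → X max-surjective and h : X → T' a rooted subtree inclusion, then X is k-dendroidal; likewise, if f = h ∘ g with g rooted max-surjective and h a subtree inclusion, then X is k-dendroidal. Consequently, both the (max-surjective, rooted subtree inclusion) and the (rooted max-surjective, subtree inclusion) factorization systems on Ω^c restrict to factorization systems on the full subcategory Ω^c_{≤k} of closed k-dendroidal trees. -/
open CategoryTheory

namespace ClosedTree

/-- An injective morphism of closed trees reflects the order. -/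
lemma Hom.le_of_map_le {T T' : ClosedTree} (h : Hom T T') (hinj : Function.Injective h.toFun)
    {a b : T.carrier} (hab : h.toFun a ≤ h.toFun b) : a ≤ b := by
  by_contra hnab
  by_cases hba : b ≤ a
  · exact hnab (le_of_eq (hinj (le_antisymm hab (h.mono hba))))
  · exact (h.indep a b ⟨hnab, hba⟩).1 hab

/-- If `h : X ⟶ T'` is a subtree inclusion and `T'` is `k`-dendroidal, so is `X`. -/
lemma isDendroidal_of_subtreeIncl {k : ℕ∞} {X T' : ClosedTree} (h : Hom X T')
    (hh : SubtreeIncl h) (hT' : IsDendroidal k T') : IsDendroidal k X := by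
  intro e
  refine le_trans (Nat.cast_le.mpr ?_) (hT' (h.toFun e))
  unfold valence
  refine Set.ncard_le_ncard_of_injOn h.toFun ?_ (fun a _ b _ hab => hh.1 hab) (Set.toFinite _)
  intro x hx
  obtain ⟨hex, hmin⟩ := hx
  constructor
  · exact lt_of_le_of_ne (h.mono hex.le) (fun heq => hex.ne (hh.1 heq))
  · intro y hy hyx
    obtain ⟨z, rfl⟩ := hh.2 e x y hy.le hyx
    have hez : e < z :=
      lt_of_le_of_ne (h.le_of_map_le hh.1 hy.le) (fun heq => hy.ne (congrArg _ heq))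
    exact h.mono (hmin hez (h.le_of_map_le hh.1 hyx))

/-- The down-closure of the image of `f`, as a closed tree. -/
def downSet {T T' : ClosedTree} (f : Hom T T') : ClosedTree where
  carrier := {y : T'.carrier // ∃ a, y ≤ f.toFun a}
  root := ⟨T'.root, T.root, T'.root_le _⟩
  root_le x := T'.root_le _
  below_linear x y z hy hz := T'.below_linear x.1 y.1 z.1 hy hz

/-- The convex hull of the image of `f` (everything between `f(root)` and the image). -/
def hullSet {T T' : ClosedTree} (f : Hom T T') : ClosedTree where
  carrier := {y : T'.carrier // f.toFun T.root ≤ y ∧ ∃ a, y ≤ f.toFun a}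
  root := ⟨f.toFun T.root, le_rfl, T.root, le_rfl⟩
  root_le x := x.2.1
  below_linear x y z hy hz := T'.below_linear x.1 y.1 z.1 hy hz

end ClosedTree

open ClosedTree in
/-- for a morphism between closed `k`-dendroidal trees, the intermediate
object of either of the two factorizations is again `k`-dendroidal; consequently both
factorization systems restrict to the full subcategory `Ω^c_{≤k}` of closed
`k`-dendroidal trees. -/
theorem factorizations_restrict_to_dendroidal (k : ℕ∞) (hk : 1 ≤ k) (T T' : ClosedTree)
    (hT : IsDendroidal k T) (hT' : IsDendroidal k T') (f : T ⟶ T') :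
    (∀ (X : ClosedTree) (g : T ⟶ X) (h : X ⟶ T'),
      MaxSurj g → SubtreeIncl h → Rooted h → g ≫ h = f → IsDendroidal k X) ∧
    (∀ (X : ClosedTree) (g : T ⟶ X) (h : X ⟶ T'),
      Rooted g → MaxSurj g → SubtreeIncl h → g ≫ h = f → IsDendroidal k X) ∧
    (∃ (X : ClosedTree) (g : T ⟶ X) (h : X ⟶ T'),
      IsDendroidal k X ∧ MaxSurj g ∧ SubtreeIncl h ∧ Rooted h ∧ g ≫ h = f) ∧
    (∃ (X : ClosedTree) (g : T ⟶ X) (h : X ⟶ T'),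
      IsDendroidal k X ∧ Rooted g ∧ MaxSurj g ∧ SubtreeIncl h ∧ g ≫ h = f) := by
  refine ⟨fun X g h _ hh _ _ => isDendroidal_of_subtreeIncl h hh hT',
         fun X g h _ _ hh _ => isDendroidal_of_subtreeIncl h hh hT', ?_, ?_⟩
  · -- (max-surjective, rooted subtree inclusion) factorization through the down-closure
    refine ⟨downSet f,
      ⟨fun a => ⟨f.toFun a, a, le_rfl⟩, fun a b hab => f.mono hab,
        fun x y hxy => f.indep x y hxy⟩,
      ⟨Subtype.val, fun _ _ hab => hab, fun _ _ hxy => hxy⟩, ?_, ?_, ?_, ?_, ?_⟩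
    · exact isDendroidal_of_subtreeIncl (X := downSet f)
        ⟨Subtype.val, fun _ _ hab => hab, fun _ _ hxy => hxy⟩
        ⟨Subtype.val_injective, fun a b y hay hyb => ⟨⟨y, b.2.choose,
          le_trans hyb b.2.choose_spec⟩, rfl⟩⟩ hT'
    · intro m hm
      obtain ⟨y, a, hya⟩ := m
      refine ⟨a, Subtype.ext ?_⟩
      have : (⟨y, a, hya⟩ : (downSet f).carrier) ≤ ⟨f.toFun a, a, le_rfl⟩ := hya
      exact le_antisymm (hm this) this
    · exact ⟨Subtype.val_injective, fun a b y hay hyb => ⟨⟨y, b.2.choose,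
        le_trans hyb b.2.choose_spec⟩, rfl⟩⟩
    · rfl
    · rfl
  · -- (rooted max-surjective, subtree inclusion) factorization through the convex hull
    refine ⟨hullSet f,
      ⟨fun a => ⟨f.toFun a, f.mono (T.root_le a), a, le_rfl⟩, fun a b hab => f.mono hab,
        fun x y hxy => f.indep x y hxy⟩,
      ⟨Subtype.val, fun _ _ hab => hab, fun _ _ hxy => hxy⟩, ?_, ?_, ?_, ?_, ?_⟩
    · exact isDendroidal_of_subtreeIncl (X := hullSet f)
        ⟨Subtype.val, fun _ _ hab => hab, fun _ _ hxy => hxy⟩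
        ⟨Subtype.val_injective, fun a b y hay hyb => ⟨⟨y, le_trans a.2.1 hay,
          b.2.2.choose, le_trans hyb b.2.2.choose_spec⟩, rfl⟩⟩ hT'
    · exact Subtype.ext rfl
    · intro m hm
      obtain ⟨y, hry, a, hya⟩ := m
      refine ⟨a, Subtype.ext ?_⟩
      have : (⟨y, hry, a, hya⟩ : (hullSet f).carrier) ≤
          ⟨f.toFun a, f.mono (T.root_le a), a, le_rfl⟩ := hya
      exact le_antisymm (hm this) this
    · exact ⟨Subtype.val_injective, fun a b y hay hyb => ⟨⟨y, le_trans a.2.1 hay,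
        b.2.2.choose, le_trans hyb b.2.2.choose_spec⟩, rfl⟩⟩
    · rfl
end

section
/- Let 1 ≤ k ≤ ∞ and let T be a closed tree. Let (Ω^c_{≤k})_{T/} be the category whose objects are morphisms g : T → X of closed trees with X k-dendroidal and whose morphisms are morphisms under T, and let (Ω^c_{≤k})_{T/^rmax} be its full subcategory on those g that are rooted and max-surjective. Then the inclusion (Ω^c_{≤k})_{T/^rmax} ↪ (Ω^c_{≤k})_{T/} admits a right adjoint, which sends an object g : T → X to the rooted max-surjective morphism g₁ : T → X₁ arising in the (rooted max-surjective, subtree inclusion) factorization g = g₂ ∘ g₁ (X₁ is k-dendroidal since it includes as a subtree of X). -/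
open CategoryTheory

open ClosedTree

/-- The category `(Ω^c_{≤k})_{T/}`: morphisms from `T` to closed `k`-dendroidal trees. -/
abbrev UnderDend (k : ℕ∞) (T : ClosedTree) :=
  ObjectProperty.FullSubcategory (fun o : Under T => IsDendroidal k o.right)

/-- The objects of `(Ω^c_{≤k})_{T/}` which are rooted and max-surjective. -/
abbrev RMaxProp (k : ℕ∞) (T : ClosedTree) : UnderDend k T → Prop :=
  fun o => Rooted o.obj.hom ∧ MaxSurj o.obj.hom


namespace RMaxAux

open ClosedTree

variable {T : ClosedTree}

/-- The set underlying the rooted max-surjective part of the factorization of `g`. -/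
def coreSet {X : ClosedTree} (g : Hom T X) : Set X.carrier :=
  {y | g.toFun T.root ≤ y ∧ ∃ e, y ≤ g.toFun e}

/-- The intermediate tree of the factorization. -/
def core {X : ClosedTree} (g : Hom T X) : ClosedTree where
  carrier := coreSet g
  root := ⟨g.toFun T.root, le_rfl, T.root, le_rfl⟩
  root_le x := x.2.1
  below_linear x y z hy hz := by
    rcases X.below_linear x.val y.val z.val hy hz with h | h
    · exact Or.inl h
    · exact Or.inr h

/-- The rooted max-surjective part. -/
def coreHom {X : ClosedTree} (g : Hom T X) : Hom T (core g) where
  toFun e := ⟨g.toFun e, g.mono (T.root_le e), e, le_rfl⟩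
  mono _ _ h := g.mono h
  indep x y h := g.indep x y h

/-- The subtree inclusion part. -/
def coreIncl {X : ClosedTree} (g : Hom T X) : Hom (core g) X where
  toFun := Subtype.val
  mono _ _ h := h
  indep _ _ h := h

lemma coreIncl_subtreeIncl {X : ClosedTree} (g : Hom T X) : SubtreeIncl (coreIncl g) := by
  refine ⟨Subtype.val_injective, fun a b y hay hyb => ?_⟩
  refine ⟨⟨y, le_trans a.2.1 hay, ?_⟩, rfl⟩
  obtain ⟨e, he⟩ := b.2.2
  exact ⟨e, le_trans hyb he⟩

lemma coreHom_comp_coreIncl {X : ClosedTree} (g : Hom T X) :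
    @CategoryStruct.comp ClosedTree _ T (core g) X (coreHom g) (coreIncl g) = g := by
  apply Hom.ext; funext t; rfl

lemma coreHom_rooted {X : ClosedTree} (g : Hom T X) : Rooted (coreHom g) := rfl

lemma coreHom_maxSurj {X : ClosedTree} (g : Hom T X) : MaxSurj (coreHom g) := by
  intro m hm
  obtain ⟨e, he⟩ := m.2.2
  have h1 : m ≤ (coreHom g).toFun e := he
  exact ⟨e, le_antisymm (hm h1) h1⟩

lemma core_minimal {X : ClosedTree} (g : Hom T X) (e : (core g).carrier)
    {x : (core g).carrier} (hx : Minimal (fun y => e < y) x) :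
    Minimal (fun y => e.val < y) x.val := by
  constructor
  · exact Subtype.coe_lt_coe.mpr hx.1
  · intro y hy hyx
    have hyc : y ∈ coreSet g := by
      refine ⟨le_trans e.2.1 hy.le, ?_⟩
      obtain ⟨e', he'⟩ := x.2.2
      exact ⟨e', le_trans hyx he'⟩
    have h2 : e < (⟨y, hyc⟩ : (core g).carrier) := Subtype.coe_lt_coe.mp hy
    have h3 : (⟨y, hyc⟩ : (core g).carrier) ≤ x := hyx
    exact hx.2 h2 h3

lemma core_valence_le {X : ClosedTree} (g : Hom T X) (e : (core g).carrier) :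
    (core g).valence e ≤ X.valence e.val := by
  apply Set.ncard_le_ncard_of_injOn Subtype.val
  · intro x hx; exact core_minimal g e hx
  · exact Subtype.val_injective.injOn

lemma core_dendroidal {X : ClosedTree} {k : ℕ∞} (g : Hom T X) (h : IsDendroidal k X) :
    IsDendroidal k (core g) := fun e =>
  le_trans (by exact_mod_cast core_valence_le g e) (h e.val)

lemma exists_le_max (Y : ClosedTree) (y : Y.carrier) : ∃ m, y ≤ m ∧ IsMax m := by
  obtain ⟨m, hm, hmax⟩ := Finite.exists_le_maximal (a := y) (p := fun _ : Y.carrier => True) trivial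
  exact ⟨m, hm, fun a ha => hmax.2 trivial ha⟩

/-- Lift of a morphism from a rooted max-surjective source through the core. -/
def lift {X Y : ClosedTree} {g : Hom T X} {u : Hom T Y} (hu : Rooted u) (hmax : MaxSurj u)
    (f : Hom Y X) (hc : ∀ t, f.toFun (u.toFun t) = g.toFun t) : Hom Y (core g) where
  toFun y := ⟨f.toFun y, by
      constructor
      · calc g.toFun T.root = f.toFun (u.toFun T.root) := (hc _).symm
          _ = f.toFun Y.root := by rw [hu]
          _ ≤ f.toFun y := f.mono (Y.root_le y)
      · obtain ⟨m, hym, hmmax⟩ := exists_le_max Y y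
        obtain ⟨e, he⟩ := hmax m hmmax
        exact ⟨e, by rw [← hc e, he]; exact f.mono hym⟩⟩
  mono _ _ h := f.mono h
  indep a b h := f.indep a b h

/-- Functoriality of the core. -/
def coreMap {X X' : ClosedTree} {g : Hom T X} {g' : Hom T X'} (w : Hom X X')
    (hw : ∀ t, w.toFun (g.toFun t) = g'.toFun t) : Hom (core g) (core g') where
  toFun y := ⟨w.toFun y.val, by
      constructor
      · rw [← hw]; exact w.mono y.2.1
      · obtain ⟨e, he⟩ := y.2.2; exact ⟨e, by rw [← hw e]; exact w.mono he⟩⟩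
  mono _ _ h := w.mono h
  indep a b h := w.indep _ _ h

end RMaxAux

/-- the inclusion of the full subcategory `(Ω^c_{≤k})_{T/^rmax}` of rooted
max-surjective morphisms into `(Ω^c_{≤k})_{T/}` admits a right adjoint, which sends
`g : T ⟶ X` to the rooted max-surjective part of its (rooted max-surjective, subtree
inclusion) factorization. -/
theorem rmax_inclusion_has_right_adjoint (k : ℕ∞) (hk : 1 ≤ k) (T : ClosedTree) :
    ∃ R : UnderDend k T ⥤ ObjectProperty.FullSubcategory (RMaxProp k T),
      Nonempty (ObjectProperty.ι (RMaxProp k T) ⊣ R) ∧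
      ∀ o : UnderDend k T,
        ∃ h : (R.obj o).obj.obj.right ⟶ o.obj.right,
          SubtreeIncl h ∧ (R.obj o).obj.obj.hom ≫ h = o.obj.hom := by
  classical
  refine ⟨?_, ?_, ?_⟩
  · exact {
      obj := fun o => ⟨⟨Under.mk (RMaxAux.coreHom o.obj.hom),
        RMaxAux.core_dendroidal _ o.property⟩,
        RMaxAux.coreHom_rooted _, RMaxAux.coreHom_maxSurj _⟩
      map := fun {o o'} m => ObjectProperty.homMk (ObjectProperty.homMk (Under.homMk
        (RMaxAux.coreMap m.hom.right (fun t => congrFun (congrArg Hom.toFun (Under.w m.hom)) t))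
        (by apply Hom.ext; funext t
            exact Subtype.ext (congrFun (congrArg Hom.toFun (Under.w m.hom)) t))))
      map_id := fun o => by
        apply ObjectProperty.hom_ext
        apply ObjectProperty.hom_ext
        apply Under.UnderMorphism.ext
        apply Hom.ext
        funext y; rfl
      map_comp := fun {o o' o''} m m' => by
        apply ObjectProperty.hom_ext
        apply ObjectProperty.hom_ext
        apply Under.UnderMorphism.ext
        apply Hom.ext
        funext y; rfl }
  · refine ⟨Adjunction.mkOfHomEquiv {
      homEquiv := fun u o => {
        toFun := fun f => ObjectProperty.homMk (ObjectProperty.homMk (Under.homMk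
          (RMaxAux.lift u.property.1 u.property.2 f.hom.right
            (fun t => congrFun (congrArg Hom.toFun (Under.w f.hom)) t))
          (by apply Hom.ext; funext t
              exact Subtype.ext (congrFun (congrArg Hom.toFun (Under.w f.hom)) t))))
        invFun := fun h => ObjectProperty.homMk (Under.homMk (h.hom.hom.right ≫ RMaxAux.coreIncl o.obj.hom)
          (by apply Hom.ext; funext t
              exact congrArg Subtype.val (congrFun (congrArg Hom.toFun (Under.w h.hom.hom)) t)))
        left_inv := fun f => by
          apply ObjectProperty.hom_ext
          apply Under.UnderMorphism.ext
          apply Hom.ext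
          funext y; rfl
        right_inv := fun h => by
          apply ObjectProperty.hom_ext
          apply ObjectProperty.hom_ext
          apply Under.UnderMorphism.ext
          apply Hom.ext
          funext y; rfl }
      homEquiv_naturality_left_symm := fun {u' u o} m f => by
        apply ObjectProperty.hom_ext
        apply Under.UnderMorphism.ext
        apply Hom.ext
        funext y; rfl
      homEquiv_naturality_right := fun {u o o'} f m => by
        apply ObjectProperty.hom_ext
        apply ObjectProperty.hom_ext
        apply Under.UnderMorphism.ext
        apply Hom.ext
        funext y; rfl }⟩
  · intro o
    exact ⟨RMaxAux.coreIncl o.obj.hom, RMaxAux.coreIncl_subtreeIncl _,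
      RMaxAux.coreHom_comp_coreIncl _⟩
end

section
/- Let 1 ≤ k ≤ ∞, let T be a closed tree, and let e be an internal edge of T. Every rooted max-surjective morphism g : T → X with X k-dendroidal restricts to rooted max-surjective morphisms g_e : T_{≥e} → X_{≥g(e)} and g^e : T^e → X^{g(e)} onto k-dendroidal trees. The resulting functor (Ω^c_{≤k})_{T/^rmax} → (Ω^c_{≤k})_{T_{≥e}/^rmax} × (Ω^c_{≤k})_{T^e/^rmax}, g ↦ (g_e, g^e), is an equivalence of categories; an inverse is given by grafting, sending a pair (g₁ : T_{≥e} → X₁, g₂ : T^e → X₂) of rooted max-surjective morphisms to the induced rooted max-surjective morphism T → X₁ ⊔_e X₂, where X₁ ⊔_e X₂ is obtained from X₂ by gluing the root of X₁ onto the maximal edge g₂(e) of X₂. -/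
open CategoryTheory

namespace ClosedTree

/-- The upper subtree `T_{≥e}`: the closed tree of edges above `e`, with root `e`. -/
def upTree (T : ClosedTree) (e : T.carrier) : ClosedTree where
  carrier := {x : T.carrier // e ≤ x}
  root := ⟨e, le_refl e⟩
  root_le x := x.prop
  below_linear x y z hy hz := T.below_linear x.val y.val z.val hy hz

/-- The lower subtree `T^e`: the closed tree of edges not strictly above `e`. -/
def downTree (T : ClosedTree) (e : T.carrier) : ClosedTree where
  carrier := {x : T.carrier // ¬ e < x}
  root := ⟨T.root, fun h => absurd (h.trans_le (T.root_le e)) (lt_irrefl e)⟩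
  root_le x := T.root_le x.val
  below_linear x y z hy hz := T.below_linear x.val y.val z.val hy hz

theorem Hom.not_lt_map {T X : ClosedTree} (g : Hom T X) {e y : T.carrier} (h : ¬ e < y) :
    ¬ g.toFun e < g.toFun y := by
  by_cases h1 : e ≤ y
  · have he : e = y := by
      by_contra hne
      exact h (lt_of_le_of_ne h1 hne)
    rw [he]
    exact lt_irrefl _
  · by_cases h2 : y ≤ e
    · intro hc
      exact (lt_iff_le_not_ge.mp hc).2 (g.mono h2)
    · intro hc
      exact (g.indep e y ⟨h1, h2⟩).1 hc.le

/-- Restriction of a morphism of closed trees to the upper subtrees `T_{≥e} → X_{≥g(e)}`. -/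
def restrictUp {T X : ClosedTree} (g : Hom T X) (e : T.carrier) :
    Hom (upTree T e) (upTree X (g.toFun e)) where
  toFun y := ⟨g.toFun y.val, g.mono y.prop⟩
  mono _ _ h := g.mono h
  indep a b h := g.indep a.val b.val h

/-- Restriction of a morphism of closed trees to the lower subtrees `T^e → X^{g(e)}`. -/
def restrictDown {T X : ClosedTree} (g : Hom T X) (e : T.carrier) :
    Hom (downTree T e) (downTree X (g.toFun e)) where
  toFun y := ⟨g.toFun y.val, g.not_lt_map y.prop⟩
  mono _ _ h := g.mono h
  indep a b h := g.indep a.val b.val h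

end ClosedTree

open ClosedTree

/-- The category `(Ω^c_{≤k})_{T/^rmax}` of rooted max-surjective morphisms from `T` to
closed `k`-dendroidal trees. -/
abbrev RMaxCat (k : ℕ∞) (T : ClosedTree) :=
  ObjectProperty.FullSubcategory (fun o : Under T => IsDendroidal k o.right ∧ Rooted o.hom ∧ MaxSurj o.hom)

namespace ClosedTree

theorem indep_symm {T : ClosedTree} {x y : T.carrier} (h : T.Indep x y) : T.Indep y x :=
  ⟨h.2, h.1⟩

theorem valence_upTree_le (T : ClosedTree) (e : T.carrier) (x : (upTree T e).carrier) :
    valence (upTree T e) x ≤ valence T x.val := by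
  apply Set.ncard_le_ncard_of_injOn (fun m => m.val)
  · rintro m ⟨hm1, hm2⟩
    refine ⟨Subtype.coe_lt_coe.mpr hm1, fun z hz hzm => ?_⟩
    have hez : e ≤ z := le_trans x.prop hz.le
    exact hm2 (y := ⟨z, hez⟩) (Subtype.coe_lt_coe.mp hz) hzm
  · exact Set.injOn_of_injective Subtype.val_injective

theorem valence_downTree_le (T : ClosedTree) (e : T.carrier) (x : (downTree T e).carrier) :
    valence (downTree T e) x ≤ valence T x.val := by
  apply Set.ncard_le_ncard_of_injOn (fun m => m.val)
  · rintro m ⟨hm1, hm2⟩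
    refine ⟨Subtype.coe_lt_coe.mpr hm1, fun z hz hzm => ?_⟩
    have hez : ¬ e < z := fun hc => m.prop (lt_of_lt_of_le hc hzm)
    exact hm2 (y := ⟨z, hez⟩) (Subtype.coe_lt_coe.mp hz) hzm
  · exact Set.injOn_of_injective Subtype.val_injective

theorem isDendroidal_upTree {k : ℕ∞} {X : ClosedTree} (h : IsDendroidal k X) (c : X.carrier) :
    IsDendroidal k (upTree X c) := fun x =>
  le_trans (by exact_mod_cast valence_upTree_le X c x) (h x.val)

theorem isDendroidal_downTree {k : ℕ∞} {X : ClosedTree} (h : IsDendroidal k X) (c : X.carrier) :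
    IsDendroidal k (downTree X c) := fun x =>
  le_trans (by exact_mod_cast valence_downTree_le X c x) (h x.val)

theorem rooted_restrictUp {T X : ClosedTree} (g : Hom T X) (e : T.carrier) :
    Rooted (restrictUp g e) := Subtype.ext rfl

theorem rooted_restrictDown {T X : ClosedTree} (g : Hom T X) (e : T.carrier)
    (hg : Rooted g) : Rooted (restrictDown g e) := Subtype.ext hg

theorem isMax_val_up {X : ClosedTree} {c : X.carrier} {m : (upTree X c).carrier}
    (hm : IsMax m) : IsMax m.val := fun y hy =>
  hm (b := ⟨y, le_trans m.prop hy⟩) hy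

theorem maxSurj_restrictUp {T X : ClosedTree} (g : Hom T X) (e : T.carrier)
    (hg : MaxSurj g) : MaxSurj (restrictUp g e) := by
  intro m hm
  obtain ⟨t, ht⟩ := hg m.val (isMax_val_up hm)
  by_cases h1 : e ≤ t
  · exact ⟨⟨t, h1⟩, Subtype.ext ht⟩
  · by_cases h2 : t ≤ e
    · have h3 : g.toFun t ≤ g.toFun e := g.mono h2
      have h4 : g.toFun e ≤ m.val := m.prop
      refine ⟨⟨e, le_refl e⟩, Subtype.ext ?_⟩
      exact le_antisymm h4 (ht ▸ h3)
    · exact absurd (ht ▸ m.prop) (g.indep e t ⟨h1, h2⟩).1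

theorem maxSurj_restrictDown {T X : ClosedTree} (g : Hom T X) (e : T.carrier)
    (hg : MaxSurj g) : MaxSurj (restrictDown g e) := by
  intro m hm
  have key : IsMax m.val ∨ m.val = g.toFun e := by
    by_cases hmax : IsMax m.val
    · exact Or.inl hmax
    · right
      obtain ⟨y, hy⟩ := not_isMax_iff.mp hmax
      have hgey : g.toFun e < y := by
        by_contra hc
        exact absurd (Subtype.coe_le_coe.mp (hm (b := ⟨y, hc⟩) hy.le)) (not_le_of_gt hy)
      rcases X.below_linear y (g.toFun e) m.val hgey.le hy.le with h | h
      · exact ((lt_or_eq_of_le h).resolve_left m.prop).symm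
      · rcases eq_or_lt_of_le h with h' | h'
        · exact h'
        · exact absurd (Subtype.coe_le_coe.mp
            (hm (b := ⟨g.toFun e, lt_irrefl _⟩) h'.le)) (not_le_of_gt h')
  rcases key with hmax | heq
  · obtain ⟨t, ht⟩ := hg m.val hmax
    by_cases h : e < t
    · have h2 : m.val = g.toFun e :=
        ((lt_or_eq_of_le (ht ▸ g.mono h.le : g.toFun e ≤ m.val)).resolve_left m.prop).symm
      exact ⟨⟨e, lt_irrefl e⟩, Subtype.ext h2.symm⟩
    · exact ⟨⟨t, h⟩, Subtype.ext ht⟩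
  · exact ⟨⟨e, lt_irrefl e⟩, Subtype.ext heq.symm⟩

end ClosedTree
namespace ClosedTree

/-- Carrier of the grafted tree (wrapper to avoid instance clashes with `Sum`). -/
structure GraftCarrier (X₁ X₂ : ClosedTree) (r : X₂.carrier) where
  val : X₂.carrier ⊕ {a : X₁.carrier // a ≠ X₁.root}

abbrev gl {X₁ X₂ : ClosedTree} {r : X₂.carrier} (x : X₂.carrier) : GraftCarrier X₁ X₂ r :=
  ⟨Sum.inl x⟩
abbrev gr {X₁ X₂ : ClosedTree} {r : X₂.carrier} (a : {a : X₁.carrier // a ≠ X₁.root}) :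
    GraftCarrier X₁ X₂ r := ⟨Sum.inr a⟩

variable (X₁ X₂ : ClosedTree) (r : X₂.carrier)

/-- The underlying relation of the grafted tree. -/
def graftLE : GraftCarrier X₁ X₂ r → GraftCarrier X₁ X₂ r → Prop
  | ⟨Sum.inl x⟩, ⟨Sum.inl y⟩ => x ≤ y
  | ⟨Sum.inl x⟩, ⟨Sum.inr _⟩ => x ≤ r
  | ⟨Sum.inr _⟩, ⟨Sum.inl _⟩ => False
  | ⟨Sum.inr a⟩, ⟨Sum.inr b⟩ => a.val ≤ b.val

instance : PartialOrder (GraftCarrier X₁ X₂ r) where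
  le := graftLE X₁ X₂ r
  lt z w := graftLE X₁ X₂ r z w ∧ ¬ graftLE X₁ X₂ r w z
  lt_iff_le_not_ge _ _ := Iff.rfl
  le_refl := by rintro ⟨x | a⟩ <;> exact le_refl _
  le_trans := by
    rintro ⟨x | a⟩ ⟨y | b⟩ ⟨z | c⟩ h1 h2 <;>
      first
        | exact h1.elim
        | exact h2.elim
        | exact le_trans h1 h2
        | exact h1
  le_antisymm := by
    rintro ⟨x | a⟩ ⟨y | b⟩ h1 h2
    · exact congrArg gl (le_antisymm h1 h2)
    · exact h2.elim
    · exact h1.elim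
    · exact congrArg gr (Subtype.ext (le_antisymm h1 h2))

instance : Finite (GraftCarrier X₁ X₂ r) :=
  Finite.of_injective GraftCarrier.val (fun a b h => by cases a; cases b; cases h; rfl)

/-- The grafted tree `X₁ ⊔_r X₂`. -/
def Graft : ClosedTree where
  carrier := GraftCarrier X₁ X₂ r
  root := gl X₂.root
  root_le := by rintro ⟨x | a⟩ <;> exact X₂.root_le _
  below_linear := by
    rintro ⟨x | a⟩ ⟨y | b⟩ ⟨z | c⟩ hy hz
    · exact X₂.below_linear x y z hy hz
    · exact hz.elim
    · exact hy.elim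
    · exact hy.elim
    · exact X₂.below_linear r y z hy hz
    · exact Or.inl hy
    · exact Or.inr hz
    · exact X₁.below_linear a.val b.val c.val hy hz

variable {X₁ X₂ r}

theorem graft_gl_le_gl {x y : X₂.carrier} :
    (gl x : GraftCarrier X₁ X₂ r) ≤ gl y ↔ x ≤ y := Iff.rfl

theorem graft_gl_le_gr {x : X₂.carrier} {a} :
    (gl x : GraftCarrier X₁ X₂ r) ≤ gr a ↔ x ≤ r := Iff.rfl

theorem graft_not_gr_le_gl {x : X₂.carrier} {a} :
    ¬ (gr a : GraftCarrier X₁ X₂ r) ≤ gl x := fun h => h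

theorem graft_gr_le_gr {a b} :
    (gr a : GraftCarrier X₁ X₂ r) ≤ gr b ↔ a.val ≤ b.val := Iff.rfl

theorem graft_gl_lt_gr (x : X₂.carrier) (hx : x ≤ r) (a) :
    (gl x : GraftCarrier X₁ X₂ r) < gr a :=
  lt_of_le_not_ge (graft_gl_le_gr.mpr hx) graft_not_gr_le_gl

variable (X₁ X₂ r)

open Classical in
/-- The inclusion map of `X₁` into the graft. -/
noncomputable def iotaFun (a : X₁.carrier) : GraftCarrier X₁ X₂ r :=
  if h : a = X₁.root then gl r else gr ⟨a, h⟩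

variable {X₁ X₂ r}

theorem iotaFun_root : iotaFun X₁ X₂ r X₁.root = gl r := dif_pos rfl

theorem iotaFun_ne {a : X₁.carrier} (h : a ≠ X₁.root) :
    iotaFun X₁ X₂ r a = gr ⟨a, h⟩ := dif_neg h

theorem graft_gl_le_iota (x : X₂.carrier) (hx : x ≤ r) (a : X₁.carrier) :
    (gl x : GraftCarrier X₁ X₂ r) ≤ iotaFun X₁ X₂ r a := by
  by_cases h : a = X₁.root
  · subst h; rw [iotaFun_root]; exact hx
  · rw [iotaFun_ne h]; exact hx

variable (X₁ X₂ r)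

/-- Inclusion of `X₁` into the graft as a morphism. -/
noncomputable def graftIota1 : Hom X₁ (Graft X₁ X₂ r) where
  toFun := iotaFun X₁ X₂ r
  mono := by
    intro a b hab
    by_cases ha : a = X₁.root
    · subst ha
      rw [iotaFun_root]
      exact graft_gl_le_iota r (le_refl r) b
    · have hb : b ≠ X₁.root := fun h => ha (le_antisymm (h ▸ hab) (X₁.root_le a))
      rw [iotaFun_ne ha, iotaFun_ne hb]
      exact hab
  indep := by
    intro a b hab
    have ha : a ≠ X₁.root := fun h => hab.1 (h ▸ X₁.root_le b)
    have hb : b ≠ X₁.root := fun h => hab.2 (h ▸ X₁.root_le a)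
    show (Graft X₁ X₂ r).Indep (iotaFun X₁ X₂ r a) (iotaFun X₁ X₂ r b)
    rw [iotaFun_ne ha, iotaFun_ne hb]
    exact ⟨hab.1, hab.2⟩

end ClosedTree
namespace ClosedTree

variable {T : ClosedTree} {e : T.carrier} {X₁ X₂ : ClosedTree}

theorem isMax_g2e (g₂ : Hom (downTree T e) X₂) (hms : MaxSurj g₂) :
    IsMax (g₂.toFun ⟨e, lt_irrefl e⟩) := by
  intro y hy
  obtain ⟨m, hym, hmmax⟩ := Finite.exists_le_maximal (a := y) (p := fun _ => True) trivial
  have hmax : IsMax m := fun b hb => hmmax.2 trivial hb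
  have hrm : g₂.toFun ⟨e, lt_irrefl e⟩ ≤ m := le_trans hy hym
  have hm_eq : m = g₂.toFun ⟨e, lt_irrefl e⟩ := by
    obtain ⟨t, ht⟩ := hms m hmax
    by_cases h2 : e ≤ t.val
    · have h3 : t = ⟨e, lt_irrefl e⟩ :=
        Subtype.ext ((lt_or_eq_of_le h2).resolve_left t.prop).symm
      rw [← ht, h3]
    · by_cases h1 : t.val ≤ e
      · exact le_antisymm (ht ▸ (g₂.mono h1 : g₂.toFun t ≤ _)) hrm
      · exact absurd (ht ▸ hrm) (g₂.indep _ t ⟨h2, h1⟩).1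
  exact hm_eq ▸ hym

open Classical in
/-- The underlying function of the grafted morphism. -/
noncomputable def graftHomFun (g₁ : Hom (upTree T e) X₁) (g₂ : Hom (downTree T e) X₂)
    (t : T.carrier) : GraftCarrier X₁ X₂ (g₂.toFun ⟨e, lt_irrefl e⟩) :=
  if h : e ≤ t then iotaFun X₁ X₂ _ (g₁.toFun ⟨t, h⟩)
  else gl (g₂.toFun ⟨t, fun hc => h hc.le⟩)

variable (g₁ : Hom (upTree T e) X₁) (g₂ : Hom (downTree T e) X₂)

theorem graftHomFun_up {t : T.carrier} (h : e ≤ t) :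
    graftHomFun g₁ g₂ t = iotaFun X₁ X₂ _ (g₁.toFun ⟨t, h⟩) := dif_pos h

theorem graftHomFun_notup {t : T.carrier} (h : ¬ e ≤ t) :
    graftHomFun g₁ g₂ t = gl (g₂.toFun ⟨t, fun hc => h hc.le⟩) := dif_neg h

theorem graftHomFun_down (hg₁ : Rooted g₁) {t : T.carrier} (h : ¬ e < t) :
    graftHomFun g₁ g₂ t = gl (g₂.toFun ⟨t, h⟩) := by
  by_cases h' : e ≤ t
  · have het : e = t := (lt_or_eq_of_le h').resolve_left h
    subst het
    rw [graftHomFun_up g₁ g₂ h']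
    have : g₁.toFun ⟨e, h'⟩ = X₁.root := hg₁
    rw [this, iotaFun_root]
  · exact dif_neg h'

/-- The grafted morphism `T → X₁ ⊔_e X₂`. -/
noncomputable def graftHom : Hom T (Graft X₁ X₂ (g₂.toFun ⟨e, lt_irrefl e⟩)) where
  toFun := graftHomFun g₁ g₂
  mono := by
    intro t s hts
    by_cases ht : e ≤ t
    · rw [graftHomFun_up g₁ g₂ ht, graftHomFun_up g₁ g₂ (ht.trans hts)]
      exact (graftIota1 X₁ X₂ _).mono (g₁.mono (hts : (⟨t, ht⟩ : (upTree T e).carrier) ≤ ⟨s, ht.trans hts⟩))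
    · by_cases hs : e ≤ s
      · rw [graftHomFun_notup g₁ g₂ ht, graftHomFun_up g₁ g₂ hs]
        have hte : t ≤ e := (T.below_linear s t e hts hs).resolve_right ht
        have h2 : g₂.toFun ⟨t, fun hc => ht hc.le⟩ ≤ g₂.toFun ⟨e, lt_irrefl e⟩ :=
          g₂.mono (hte : (⟨t, _⟩ : (downTree T e).carrier) ≤ ⟨e, lt_irrefl e⟩)
        exact graft_gl_le_iota _ h2 _
      · rw [graftHomFun_notup g₁ g₂ ht, graftHomFun_notup g₁ g₂ hs]
        exact g₂.mono (hts : (⟨t, _⟩ : (downTree T e).carrier) ≤ ⟨s, _⟩)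
  indep := by
    have mixed : ∀ t s : T.carrier, T.Indep t s → (ht : e ≤ t) → (hs : ¬ e ≤ s) →
        (Graft X₁ X₂ (g₂.toFun ⟨e, lt_irrefl e⟩)).Indep
          (graftHomFun g₁ g₂ t) (graftHomFun g₁ g₂ s) := by
      intro t s hts ht hs
      rw [graftHomFun_up g₁ g₂ ht, graftHomFun_notup g₁ g₂ hs]
      have hse : ¬ s ≤ e := fun hc => hts.2 (hc.trans ht)
      have hindep : X₂.Indep (g₂.toFun ⟨s, fun hc => hs hc.le⟩) (g₂.toFun ⟨e, lt_irrefl e⟩) :=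
        g₂.indep _ _ ⟨hse, hs⟩
      by_cases h : g₁.toFun ⟨t, ht⟩ = X₁.root
      · rw [h, iotaFun_root]
        exact ⟨fun hc => hindep.2 hc, fun hc => hindep.1 hc⟩
      · rw [iotaFun_ne h]
        exact ⟨graft_not_gr_le_gl, fun hc => hindep.1 hc⟩
    intro t s hts
    by_cases ht : e ≤ t
    · by_cases hs : e ≤ s
      · rw [graftHomFun_up g₁ g₂ ht, graftHomFun_up g₁ g₂ hs]
        exact (graftIota1 X₁ X₂ _).indep _ _ (g₁.indep ⟨t, ht⟩ ⟨s, hs⟩ ⟨hts.1, hts.2⟩)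
      · exact mixed t s hts ht hs
    · by_cases hs : e ≤ s
      · exact indep_symm (mixed s t (indep_symm hts) hs ht)
      · rw [graftHomFun_notup g₁ g₂ ht, graftHomFun_notup g₁ g₂ hs]
        have := g₂.indep ⟨t, fun hc => ht hc.le⟩ ⟨s, fun hc => hs hc.le⟩ ⟨hts.1, hts.2⟩
        exact ⟨this.1, this.2⟩

theorem rooted_graftHom (he₁ : e ≠ T.root) (hg₁ : Rooted g₁) (hg₂ : Rooted g₂) :
    Rooted (graftHom g₁ g₂) := by
  have h : ¬ e < T.root := fun hc => he₁ (le_antisymm (hc.le.trans (le_refl _)) (T.root_le e) ▸ rfl)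
  show graftHomFun g₁ g₂ T.root = _
  rw [graftHomFun_down g₁ g₂ hg₁ h]
  have : g₂.toFun ⟨T.root, h⟩ = X₂.root := hg₂
  rw [this]
  rfl

theorem maxSurj_graftHom (hg₁ : Rooted g₁) (hm₁ : MaxSurj g₁) (hm₂ : MaxSurj g₂) :
    MaxSurj (graftHom g₁ g₂) := by
  rintro ⟨x | a⟩ hm
  · -- x is maximal in X₂
    have hx : IsMax x := fun y hy => (hm (b := gl y) hy : (gl y : GraftCarrier X₁ X₂ _) ≤ gl x)
    obtain ⟨t, ht⟩ := hm₂ x hx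
    by_cases h : e ≤ t.val
    · -- then t = e and x = g₂ e; use e itself
      have h3 : t = ⟨e, lt_irrefl e⟩ :=
        Subtype.ext ((lt_or_eq_of_le h).resolve_left t.prop).symm
      refine ⟨e, ?_⟩
      show graftHomFun g₁ g₂ e = _
      rw [graftHomFun_down g₁ g₂ hg₁ (lt_irrefl e), ← ht, h3]
    · refine ⟨t.val, ?_⟩
      show graftHomFun g₁ g₂ t.val = _
      rw [graftHomFun_down g₁ g₂ hg₁ t.prop]
      exact congrArg gl (ht ▸ congrArg g₂.toFun (Subtype.ext rfl))
  · -- a is maximal in X₁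
    have ha : IsMax a.val := by
      intro y hy
      have hy' : y ≠ X₁.root := fun hc =>
        a.prop (le_antisymm (hc ▸ hy) (X₁.root_le a.val))
      exact (hm (b := gr ⟨y, hy'⟩) hy : (gr ⟨y, hy'⟩ : GraftCarrier X₁ X₂ _) ≤ gr a)
    obtain ⟨t, ht⟩ := hm₁ a.val ha
    refine ⟨t.val, ?_⟩
    show graftHomFun g₁ g₂ t.val = _
    rw [graftHomFun_up g₁ g₂ t.prop]
    have : g₁.toFun ⟨t.val, t.prop⟩ = a.val := ht ▸ congrArg g₁.toFun (Subtype.ext rfl)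
    rw [this, iotaFun_ne a.prop]

end ClosedTree
namespace ClosedTree

variable {X₁ X₂ : ClosedTree} {r : X₂.carrier}

theorem valence_graft_gr (a : {a : X₁.carrier // a ≠ X₁.root}) :
    valence (Graft X₁ X₂ r) (gr a) ≤ valence X₁ a.val := by
  apply Set.ncard_le_ncard_of_injOn (fun w => Sum.elim (fun _ => X₁.root) Subtype.val w.val)
  · rintro ⟨x | b⟩ hw
    · exact absurd hw.1.le graft_not_gr_le_gl
    · refine ⟨lt_of_le_not_ge hw.1.le hw.1.not_ge, fun y hy hyb => ?_⟩
      have hy0 : y ≠ X₁.root := fun h0 => absurd (h0 ▸ X₁.root_le a.val) (not_le_of_gt hy)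
      exact hw.2 (y := gr ⟨y, hy0⟩) (lt_of_le_not_ge (graft_gr_le_gr.mpr hy.le) (fun hc => not_le_of_gt hy (graft_gr_le_gr.mp hc)))
        (hyb : (gr ⟨y, hy0⟩ : GraftCarrier X₁ X₂ r) ≤ gr b)
  · rintro ⟨x | b⟩ hw1 ⟨y | c⟩ hw2 h
    · exact absurd hw1.1.le graft_not_gr_le_gl
    · exact absurd hw1.1.le graft_not_gr_le_gl
    · exact absurd hw2.1.le graft_not_gr_le_gl
    · exact congrArg gr (Subtype.ext h)

theorem valence_graft_gl_r (hr : IsMax r) :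
    valence (Graft X₁ X₂ r) (gl r) ≤ valence X₁ X₁.root := by
  apply Set.ncard_le_ncard_of_injOn (fun w => Sum.elim (fun _ => X₁.root) Subtype.val w.val)
  · rintro ⟨x | b⟩ hw
    · exact absurd (hr hw.1.le) (fun hc => hw.1.not_ge hc)
    · refine ⟨lt_of_le_of_ne (X₁.root_le b.val) (Ne.symm b.prop), fun y hy hyb => ?_⟩
      have hy0 : y ≠ X₁.root := (ne_of_gt hy)
      exact hw.2 (y := gr ⟨y, hy0⟩) (graft_gl_lt_gr r (le_refl r) _)
        (hyb : (gr ⟨y, hy0⟩ : GraftCarrier X₁ X₂ r) ≤ gr b)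
  · rintro ⟨x | b⟩ hw1 ⟨y | c⟩ hw2 h
    · exact absurd (hr hw1.1.le) (fun hc => hw1.1.not_ge hc)
    · exact absurd (hr hw1.1.le) (fun hc => hw1.1.not_ge hc)
    · exact absurd (hr hw2.1.le) (fun hc => hw2.1.not_ge hc)
    · exact congrArg gr (Subtype.ext h)

theorem valence_graft_gl (hr : IsMax r) {x : X₂.carrier} (hx : ¬ r ≤ x) :
    valence (Graft X₁ X₂ r) (gl x) ≤ valence X₂ x := by
  have hgr : ∀ (b) (hw : Minimal (fun w => (gl x : GraftCarrier X₁ X₂ r) < w) (gr b)), False := by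
    intro b hw
    have hxr : x ≤ r := hw.1.le
    have hlt : x < r := lt_of_le_of_ne hxr (fun hc => hx (hc ▸ le_refl r))
    have h1 : (gl x : GraftCarrier X₁ X₂ r) < gl r :=
      lt_of_le_not_ge (graft_gl_le_gl.mpr hxr) (fun hc => not_le_of_gt hlt (graft_gl_le_gl.mp hc))
    exact graft_not_gr_le_gl (hw.2 h1 (graft_gl_le_gr.mpr (le_refl r)))
  apply Set.ncard_le_ncard_of_injOn (fun w => Sum.elim id (fun _ => X₂.root) w.val)
  · rintro ⟨y | b⟩ hw
    · refine ⟨lt_of_le_not_ge hw.1.le hw.1.not_ge, fun z hz hzy => ?_⟩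
      exact hw.2 (y := gl z) (lt_of_le_not_ge (graft_gl_le_gl.mpr hz.le) (fun hc => not_le_of_gt hz (graft_gl_le_gl.mp hc)))
        (hzy : (gl z : GraftCarrier X₁ X₂ r) ≤ gl y)
    · exact (hgr b hw).elim
  · rintro ⟨y | b⟩ hw1 ⟨z | c⟩ hw2 h
    · exact congrArg gl h
    · exact (hgr c hw2).elim
    · exact (hgr b hw1).elim
    · exact (hgr b hw1).elim

theorem isDendroidal_graft {k : ℕ∞} (h₁ : IsDendroidal k X₁) (h₂ : IsDendroidal k X₂)
    (hr : IsMax r) : IsDendroidal k (Graft X₁ X₂ r) := by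
  rintro ⟨x | a⟩
  · by_cases hx : r ≤ x
    · have hxr : x = r := le_antisymm (hr hx) hx
      subst hxr
      exact le_trans (by exact_mod_cast valence_graft_gl_r hr) (h₁ X₁.root)
    · exact le_trans (by exact_mod_cast valence_graft_gl hr hx) (h₂ x)
  · exact le_trans (by exact_mod_cast valence_graft_gr a) (h₁ a.val)

end ClosedTree
namespace ClosedTree

variable {T X X' : ClosedTree}

/-- Restriction-to-upper-trees applied to a commuting triangle. -/
def upMapC (e : T.carrier) (g : Hom T X) (g' : Hom T X') (f : Hom X X')
    (hf : ∀ t, f.toFun (g.toFun t) = g'.toFun t) :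
    Hom (upTree X (g.toFun e)) (upTree X' (g'.toFun e)) where
  toFun y := ⟨f.toFun y.val, by rw [← hf e]; exact f.mono y.prop⟩
  mono _ _ h := f.mono h
  indep a b h := f.indep a.val b.val ⟨h.1, h.2⟩

/-- Restriction-to-lower-trees applied to a commuting triangle. -/
def downMapC (e : T.carrier) (g : Hom T X) (g' : Hom T X') (f : Hom X X')
    (hf : ∀ t, f.toFun (g.toFun t) = g'.toFun t) :
    Hom (downTree X (g.toFun e)) (downTree X' (g'.toFun e)) where
  toFun y := ⟨f.toFun y.val, by rw [← hf e]; exact f.not_lt_map y.prop⟩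
  mono _ _ h := f.mono h
  indep a b h := f.indep a.val b.val ⟨h.1, h.2⟩

open Classical in
/-- Gluing a morphism on the upper tree and a morphism on the lower tree. -/
noncomputable def glueFun {c : X.carrier} {c' : X'.carrier}
    (u : Hom (upTree X c) (upTree X' c')) (d : Hom (downTree X c) (downTree X' c'))
    (x : X.carrier) : X'.carrier :=
  if h : c ≤ x then (u.toFun ⟨x, h⟩).val else (d.toFun ⟨x, fun hc => h hc.le⟩).val

variable {c : X.carrier} {c' : X'.carrier}
  (u : Hom (upTree X c) (upTree X' c')) (d : Hom (downTree X c) (downTree X' c'))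

theorem glueFun_up {x : X.carrier} (h : c ≤ x) :
    glueFun u d x = (u.toFun ⟨x, h⟩).val := dif_pos h

theorem glueFun_notup {x : X.carrier} (h : ¬ c ≤ x) :
    glueFun u d x = (d.toFun ⟨x, fun hc => h hc.le⟩).val := dif_neg h

theorem glueFun_down (hu : (u.toFun ⟨c, le_refl c⟩).val = c')
    (hd : (d.toFun ⟨c, lt_irrefl c⟩).val = c') {x : X.carrier} (h : ¬ c < x) :
    glueFun u d x = (d.toFun ⟨x, h⟩).val := by
  by_cases h' : c ≤ x
  · have hxc : c = x := (lt_or_eq_of_le h').resolve_left h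
    subst hxc
    rw [glueFun_up u d (le_refl c), hu, hd]
  · exact dif_neg h'

variable (hu : (u.toFun ⟨c, le_refl c⟩).val = c') (hd : (d.toFun ⟨c, lt_irrefl c⟩).val = c')

include hu hd in
theorem glueFun_mono : Monotone (glueFun u d) := by
  intro x y hxy
  by_cases hx : c ≤ x
  · rw [glueFun_up u d hx, glueFun_up u d (hx.trans hxy)]
    exact u.mono (hxy : (⟨x, hx⟩ : (upTree X c).carrier) ≤ ⟨y, _⟩)
  · by_cases hy : c ≤ y
    · rw [glueFun_notup u d hx, glueFun_up u d hy]
      have hxc : x ≤ c := (X.below_linear y x c hxy hy).resolve_right hx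
      have h1 : (d.toFun ⟨x, fun hc => hx hc.le⟩).val ≤ (d.toFun ⟨c, lt_irrefl c⟩).val :=
        d.mono (hxc : (⟨x, _⟩ : (downTree X c).carrier) ≤ ⟨c, lt_irrefl c⟩)
      exact h1.trans (hd.trans_le (u.toFun ⟨y, hy⟩).prop)
    · rw [glueFun_notup u d hx, glueFun_notup u d hy]
      exact d.mono (hxy : (⟨x, _⟩ : (downTree X c).carrier) ≤ ⟨y, _⟩)

include hu hd in
theorem glueFun_indep : ∀ x y, X.Indep x y → X'.Indep (glueFun u d x) (glueFun u d y) := by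
  have mixed : ∀ x y, X.Indep x y → (hx : c ≤ x) → (hy : ¬ c ≤ y) →
      X'.Indep (glueFun u d x) (glueFun u d y) := by
    intro x y hxy hx hy
    rw [glueFun_up u d hx, glueFun_notup u d hy]
    have hyc : ¬ y ≤ c := fun hcc => hxy.2 (hcc.trans hx)
    have hind : (downTree X' c').Indep (d.toFun ⟨y, fun hc => hy hc.le⟩)
        (d.toFun ⟨c, lt_irrefl c⟩) := d.indep _ _ ⟨hyc, hy⟩
    have h1 : c' ≤ (u.toFun ⟨x, hx⟩).val := (u.toFun ⟨x, hx⟩).prop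
    constructor
    · intro hc
      exact hind.2 (hd.trans_le (h1.trans hc))
    · intro hc
      rcases X'.below_linear (u.toFun ⟨x, hx⟩).val (d.toFun ⟨y, fun hc' => hy hc'.le⟩).val c'
        hc h1 with h | h
      · exact hind.1 (h.trans_eq hd.symm)
      · exact hind.2 (hd.trans_le h)
  intro x y hxy
  by_cases hx : c ≤ x
  · by_cases hy : c ≤ y
    · rw [glueFun_up u d hx, glueFun_up u d hy]
      have := u.indep ⟨x, hx⟩ ⟨y, hy⟩ ⟨hxy.1, hxy.2⟩
      exact ⟨this.1, this.2⟩
    · exact mixed x y hxy hx hy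
  · by_cases hy : c ≤ y
    · exact indep_symm (mixed y x (indep_symm hxy) hy hx)
    · rw [glueFun_notup u d hx, glueFun_notup u d hy]
      have := d.indep ⟨x, fun hc => hx hc.le⟩ ⟨y, fun hc => hy hc.le⟩ ⟨hxy.1, hxy.2⟩
      exact ⟨this.1, this.2⟩

/-- The glued morphism. -/
noncomputable def glueHom : Hom X X' where
  toFun := glueFun u d
  mono := glueFun_mono u d hu hd
  indep := glueFun_indep u d hu hd

end ClosedTree
open ClosedTree CategoryTheory

theorem under_w_toFun {T : ClosedTree} {o o' : Under T} (h : o ⟶ o') (t : T.carrier) :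
    h.right.toFun (o.hom.toFun t) = o'.hom.toFun t :=
  congrFun (congrArg ClosedTree.Hom.toFun (Under.w h)) t

/-- The cutting functor. -/
def Phi (k : ℕ∞) (T : ClosedTree) (e : T.carrier) :
    RMaxCat k T ⥤ RMaxCat k (upTree T e) × RMaxCat k (downTree T e) where
  obj o := (⟨Under.mk (restrictUp o.obj.hom e),
              isDendroidal_upTree o.property.1 _,
              rooted_restrictUp _ e,
              maxSurj_restrictUp _ e o.property.2.2⟩,
            ⟨Under.mk (restrictDown o.obj.hom e),
              isDendroidal_downTree o.property.1 _,
              rooted_restrictDown _ e o.property.2.1,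
              maxSurj_restrictDown _ e o.property.2.2⟩)
  map {o o'} h :=
    (⟨Under.homMk (upMapC e o.obj.hom o'.obj.hom h.hom.right (under_w_toFun h.hom))
        (by apply ClosedTree.Hom.ext; funext t; exact Subtype.ext (under_w_toFun h.hom t.val))⟩,
     ⟨Under.homMk (downMapC e o.obj.hom o'.obj.hom h.hom.right (under_w_toFun h.hom))
        (by apply ClosedTree.Hom.ext; funext t; exact Subtype.ext (under_w_toFun h.hom t.val))⟩)
  map_id o := by
    refine Prod.ext ?_ ?_ <;> (apply ObjectProperty.hom_ext; apply StructuredArrow.hom_ext; apply ClosedTree.Hom.ext; funext y; exact Subtype.ext rfl)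
  map_comp {o o' o''} h h' := by
    refine Prod.ext ?_ ?_ <;> (apply ObjectProperty.hom_ext; apply StructuredArrow.hom_ext; apply ClosedTree.Hom.ext; funext y; exact Subtype.ext rfl)

instance Phi_faithful (k : ℕ∞) (T : ClosedTree) (e : T.carrier) : (Phi k T e).Faithful where
  map_injective {o o'} h h' heq := by
    have h1 := congrArg (fun p => (Prod.fst p).hom.right.toFun) heq
    have h2 := congrArg (fun p => (Prod.snd p).hom.right.toFun) heq
    apply ObjectProperty.hom_ext
    apply StructuredArrow.hom_ext
    apply ClosedTree.Hom.ext
    funext x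
    by_cases hx : o.obj.hom.toFun e ≤ x
    · exact congrArg Subtype.val (congrFun h1 ⟨x, hx⟩)
    · exact congrArg Subtype.val (congrFun h2 ⟨x, fun hc => hx hc.le⟩)

instance Phi_full (k : ℕ∞) (T : ClosedTree) (e : T.carrier) : (Phi k T e).Full where
  map_surjective {o o'} p := by
    obtain ⟨u, d⟩ := p
    have hu : ∀ t : (upTree T e).carrier,
        u.hom.right.toFun ((restrictUp o.obj.hom e).toFun t) = (restrictUp o'.obj.hom e).toFun t :=
      fun t => congrFun (congrArg ClosedTree.Hom.toFun (Under.w u.hom)) t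
    have hd : ∀ t : (downTree T e).carrier,
        d.hom.right.toFun ((restrictDown o.obj.hom e).toFun t) =
          (restrictDown o'.obj.hom e).toFun t :=
      fun t => congrFun (congrArg ClosedTree.Hom.toFun (Under.w d.hom)) t
    have hur : (u.hom.right.toFun ⟨o.obj.hom.toFun e, le_refl _⟩).val = o'.obj.hom.toFun e :=
      congrArg Subtype.val (hu ⟨e, le_refl e⟩)
    have hdr : (d.hom.right.toFun ⟨o.obj.hom.toFun e, lt_irrefl _⟩).val = o'.obj.hom.toFun e :=
      congrArg Subtype.val (hd ⟨e, lt_irrefl e⟩)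
    have hcomm : ∀ t, (glueHom u.hom.right d.hom.right hur hdr).toFun (o.obj.hom.toFun t) =
        o'.obj.hom.toFun t := by
      intro t
      by_cases ht : e ≤ t
      · rw [show (glueHom u.hom.right d.hom.right hur hdr).toFun (o.obj.hom.toFun t)
            = (u.hom.right.toFun ⟨o.obj.hom.toFun t, o.obj.hom.mono ht⟩).val from
          glueFun_up u.hom.right d.hom.right (o.obj.hom.mono ht)]
        exact congrArg Subtype.val (hu ⟨t, ht⟩)
      · have hnl : ¬ o.obj.hom.toFun e < o.obj.hom.toFun t :=
          o.obj.hom.not_lt_map (fun hc => ht hc.le)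
        rw [show (glueHom u.hom.right d.hom.right hur hdr).toFun (o.obj.hom.toFun t)
            = (d.hom.right.toFun ⟨o.obj.hom.toFun t, hnl⟩).val from
          glueFun_down u.hom.right d.hom.right hur hdr hnl]
        exact congrArg Subtype.val (hd ⟨t, fun hc => ht hc.le⟩)
    refine ⟨⟨Under.homMk (glueHom u.hom.right d.hom.right hur hdr)
      (by apply ClosedTree.Hom.ext; funext t; exact hcomm t)⟩, ?_⟩
    refine Prod.ext ?_ ?_
    · apply ObjectProperty.hom_ext
      apply StructuredArrow.hom_ext
      apply ClosedTree.Hom.ext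
      funext y
      exact Subtype.ext (glueFun_up u.hom.right d.hom.right y.prop)
    · apply ObjectProperty.hom_ext
      apply StructuredArrow.hom_ext
      apply ClosedTree.Hom.ext
      funext y
      exact Subtype.ext (glueFun_down u.hom.right d.hom.right hur hdr y.prop)
namespace ClosedTree

variable {X₁ X₂ : ClosedTree} {r : X₂.carrier}

theorem elim_iotaFun (a : X₁.carrier) :
    Sum.elim (fun _ => X₁.root) Subtype.val (iotaFun X₁ X₂ r a).val = a := by
  by_cases h : a = X₁.root
  · subst h; rw [iotaFun_root]; rfl
  · rw [iotaFun_ne h]; rfl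

theorem graft_up_gl_eq (hr : IsMax r) (c : GraftCarrier X₁ X₂ r) (hc : c = gl r)
    {x : X₂.carrier} (h : c ≤ gl x) : gl x = c := by
  subst hc
  exact congrArg gl (le_antisymm (hr (h : r ≤ x)) (h : r ≤ x))

/-- The upper subtree of a graft maps to `X₁`. -/
def graftUpHom (hr : IsMax r) (c : GraftCarrier X₁ X₂ r) (hc : c = gl r) :
    Hom (upTree (Graft X₁ X₂ r) c) X₁ where
  toFun z := Sum.elim (fun _ => X₁.root) Subtype.val z.val.val
  mono := by
    rintro ⟨⟨x | a⟩, hz⟩ ⟨⟨y | b⟩, hw⟩ h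
    · exact le_refl X₁.root
    · exact X₁.root_le b.val
    · exact absurd h graft_not_gr_le_gl
    · exact h
  indep := by
    rintro ⟨⟨x | a⟩, hz⟩ ⟨⟨y | b⟩, hw⟩ h
    · exact absurd ((graft_up_gl_eq hr c hc hz) ▸ hw :
        (⟨gl x, hz⟩ : (upTree (Graft X₁ X₂ r) c).carrier).val ≤ _) h.1
    · exact absurd ((graft_up_gl_eq hr c hc hz) ▸ hw :
        (⟨gl x, hz⟩ : (upTree (Graft X₁ X₂ r) c).carrier).val ≤ _) h.1
    · exact absurd ((graft_up_gl_eq hr c hc hw) ▸ hz :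
        (⟨gl y, hw⟩ : (upTree (Graft X₁ X₂ r) c).carrier).val ≤ _) h.2
    · exact ⟨h.1, h.2⟩

/-- `X₁` maps to the upper subtree of a graft. -/
noncomputable def graftUpInv (hr : IsMax r) (c : GraftCarrier X₁ X₂ r) (hc : c = gl r) :
    Hom X₁ (upTree (Graft X₁ X₂ r) c) where
  toFun a := ⟨iotaFun X₁ X₂ r a, by rw [hc]; exact graft_gl_le_iota r (le_refl r) a⟩
  mono _ _ h := (graftIota1 X₁ X₂ r).mono h
  indep a b h := (graftIota1 X₁ X₂ r).indep a b h

theorem graftUp_hom_inv (hr : IsMax r) (c : GraftCarrier X₁ X₂ r) (hc : c = gl r)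
    (z : (upTree (Graft X₁ X₂ r) c).carrier) :
    (graftUpInv hr c hc).toFun ((graftUpHom hr c hc).toFun z) = z := by
  obtain ⟨⟨x | a⟩, hz⟩ := z
  · refine Subtype.ext ?_
    show iotaFun X₁ X₂ r X₁.root = gl x
    rw [iotaFun_root]
    exact hc ▸ (graft_up_gl_eq hr c hc hz).symm
  · refine Subtype.ext ?_
    show iotaFun X₁ X₂ r a.val = gr a
    rw [iotaFun_ne a.prop]

theorem graftUp_inv_hom (hr : IsMax r) (c : GraftCarrier X₁ X₂ r) (hc : c = gl r)
    (a : X₁.carrier) :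
    (graftUpHom hr c hc).toFun ((graftUpInv hr c hc).toFun a) = a := elim_iotaFun a

/-- The lower subtree of a graft maps to `X₂`. -/
def graftDownHom (hr : IsMax r) (c : GraftCarrier X₁ X₂ r) (hc : c = gl r) :
    Hom (downTree (Graft X₁ X₂ r) c) X₂ where
  toFun z := Sum.elim id (fun _ => X₂.root) z.val.val
  mono := by
    rintro ⟨⟨x | a⟩, hz⟩ ⟨⟨y | b⟩, hw⟩ h
    · exact h
    · exact absurd (hc ▸ graft_gl_lt_gr r (le_refl r) b) hw
    · exact absurd (hc ▸ graft_gl_lt_gr r (le_refl r) a) hz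
    · exact absurd (hc ▸ graft_gl_lt_gr r (le_refl r) a) hz
  indep := by
    rintro ⟨⟨x | a⟩, hz⟩ ⟨⟨y | b⟩, hw⟩ h
    · exact ⟨h.1, h.2⟩
    · exact absurd (hc ▸ graft_gl_lt_gr r (le_refl r) b) hw
    · exact absurd (hc ▸ graft_gl_lt_gr r (le_refl r) a) hz
    · exact absurd (hc ▸ graft_gl_lt_gr r (le_refl r) a) hz

theorem graft_not_c_lt_gl (hr : IsMax r) (c : GraftCarrier X₁ X₂ r) (hc : c = gl r)
    (y : X₂.carrier) : ¬ c < (gl y : GraftCarrier X₁ X₂ r) := by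
  subst hc
  intro hlt
  exact hlt.not_ge (hr (hlt.le : r ≤ y))

/-- `X₂` maps to the lower subtree of a graft. -/
def graftDownInv (hr : IsMax r) (c : GraftCarrier X₁ X₂ r) (hc : c = gl r) :
    Hom X₂ (downTree (Graft X₁ X₂ r) c) where
  toFun y := ⟨gl y, graft_not_c_lt_gl hr c hc y⟩
  mono _ _ h := h
  indep _ _ h := ⟨h.1, h.2⟩

theorem graftDown_hom_inv (hr : IsMax r) (c : GraftCarrier X₁ X₂ r) (hc : c = gl r)
    (z : (downTree (Graft X₁ X₂ r) c).carrier) :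
    (graftDownInv hr c hc).toFun ((graftDownHom hr c hc).toFun z) = z := by
  obtain ⟨⟨x | a⟩, hz⟩ := z
  · exact Subtype.ext rfl
  · exact absurd (hc ▸ graft_gl_lt_gr r (le_refl r) a) hz

theorem graftDown_inv_hom (hr : IsMax r) (c : GraftCarrier X₁ X₂ r) (hc : c = gl r)
    (y : X₂.carrier) :
    (graftDownHom hr c hc).toFun ((graftDownInv hr c hc).toFun y) = y := rfl

end ClosedTree
open ClosedTree CategoryTheory in
theorem Phi_essSurj (k : ℕ∞) (T : ClosedTree) (e : T.carrier) (he₁ : e ≠ T.root) :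
    (Phi k T e).EssSurj := by
  constructor
  rintro ⟨P₁, P₂⟩
  have hr : IsMax (P₂.obj.hom.toFun ⟨e, lt_irrefl e⟩) := isMax_g2e _ P₂.property.2.2
  set g₁ := P₁.obj.hom with hg₁def
  set g₂ := P₂.obj.hom with hg₂def
  set G := graftHom g₁ g₂ with hGdef
  have hc : G.toFun e = gl (g₂.toFun ⟨e, lt_irrefl e⟩) := by
    show graftHomFun g₁ g₂ e = _
    rw [graftHomFun_up g₁ g₂ (le_refl e),
      show g₁.toFun ⟨e, le_refl e⟩ = P₁.obj.right.root from P₁.property.2.1]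
    exact iotaFun_root
  refine ⟨⟨Under.mk G,
    isDendroidal_graft P₁.property.1 P₂.property.1 hr,
    rooted_graftHom g₁ g₂ he₁ P₁.property.2.1 P₂.property.2.1,
    maxSurj_graftHom g₁ g₂ P₁.property.2.1 P₁.property.2.2 P₂.property.2.2⟩, ⟨?_⟩⟩
  have uIso : Under.mk (restrictUp G e) ≅ P₁.obj := by
    refine Under.isoMk (Iso.mk (graftUpHom hr (G.toFun e) hc) (graftUpInv hr (G.toFun e) hc)
      (ClosedTree.Hom.ext (funext (graftUp_hom_inv hr _ hc)))
      (ClosedTree.Hom.ext (funext (graftUp_inv_hom hr _ hc)))) ?_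
    apply ClosedTree.Hom.ext
    funext t
    show Sum.elim _ _ (G.toFun t.val).val = g₁.toFun t
    rw [show G.toFun t.val = graftHomFun g₁ g₂ t.val from rfl, graftHomFun_up g₁ g₂ t.prop]
    exact elim_iotaFun _
  have dIso : Under.mk (restrictDown G e) ≅ P₂.obj := by
    refine Under.isoMk (Iso.mk (graftDownHom hr (G.toFun e) hc) (graftDownInv hr (G.toFun e) hc)
      (ClosedTree.Hom.ext (funext (graftDown_hom_inv hr _ hc)))
      (ClosedTree.Hom.ext (funext (graftDown_inv_hom hr _ hc)))) ?_
    apply ClosedTree.Hom.ext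
    funext t
    show Sum.elim _ _ (G.toFun t.val).val = g₂.toFun t
    rw [show G.toFun t.val = graftHomFun g₁ g₂ t.val from rfl,
      graftHomFun_down g₁ g₂ P₁.property.2.1 t.prop]
    rfl
  exact Iso.mk (⟨uIso.hom⟩, ⟨dIso.hom⟩) (⟨uIso.inv⟩, ⟨dIso.inv⟩)
    (Prod.ext (by apply ObjectProperty.hom_ext; exact uIso.hom_inv_id)
      (by apply ObjectProperty.hom_ext; exact dIso.hom_inv_id))
    (Prod.ext (by apply ObjectProperty.hom_ext; exact uIso.inv_hom_id)
      (by apply ObjectProperty.hom_ext; exact dIso.inv_hom_id))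
/-- cutting a closed tree at an internal edge `e`. Every rooted
max-surjective morphism `g : T ⟶ X` with `X` `k`-dendroidal restricts to rooted
max-surjective morphisms `T_{≥e} → X_{≥g(e)}` and `T^e → X^{g(e)}` onto `k`-dendroidal
trees, and the induced functor `(Ω^c_{≤k})_{T/^rmax} →
(Ω^c_{≤k})_{T_{≥e}/^rmax} × (Ω^c_{≤k})_{T^e/^rmax}` is an equivalence of categories,
with an inverse given by grafting. -/
theorem cutting_rmax_equivalence (k : ℕ∞) (hk : 1 ≤ k) (T : ClosedTree) (e : T.carrier)
    (he₁ : e ≠ T.root) (he₂ : ¬ IsMax e) :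
    (∀ (X : ClosedTree) (g : ClosedTree.Hom T X),
      IsDendroidal k X → Rooted g → MaxSurj g →
      (IsDendroidal k (upTree X (g.toFun e)) ∧ Rooted (restrictUp g e) ∧
        MaxSurj (restrictUp g e)) ∧
      (IsDendroidal k (downTree X (g.toFun e)) ∧ Rooted (restrictDown g e) ∧
        MaxSurj (restrictDown g e))) ∧
    ∃ Φ : RMaxCat k T ⥤ RMaxCat k (upTree T e) × RMaxCat k (downTree T e),
      (∀ o : RMaxCat k T,
        (Φ.obj o).1.obj = Under.mk (restrictUp o.obj.hom e) ∧
        (Φ.obj o).2.obj = Under.mk (restrictDown o.obj.hom e)) ∧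
      ∃ Ψ : RMaxCat k (upTree T e) × RMaxCat k (downTree T e) ⥤ RMaxCat k T,
        Nonempty (Φ ⋙ Ψ ≅ 𝟭 (RMaxCat k T)) ∧
        Nonempty (Ψ ⋙ Φ ≅ 𝟭 (RMaxCat k (upTree T e) × RMaxCat k (downTree T e))) := by
  constructor
  · intro X g hd hro hm
    exact ⟨⟨isDendroidal_upTree hd _, rooted_restrictUp g e, maxSurj_restrictUp g e hm⟩,
           ⟨isDendroidal_downTree hd _, rooted_restrictDown g e hro, maxSurj_restrictDown g e hm⟩⟩
  · refine ⟨Phi k T e, fun o => ⟨rfl, rfl⟩, ?_⟩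
    haveI := Phi_essSurj k T e he₁
    haveI : (Phi k T e).IsEquivalence := {}
    exact ⟨(Phi k T e).asEquivalence.inverse,
      ⟨(Phi k T e).asEquivalence.unitIso.symm⟩,
      ⟨(Phi k T e).asEquivalence.counitIso⟩⟩
end

section
/- Let C be a category with finite products, S a finite set, (X_s)_{s∈S} a family of objects of C, and k ≥ 1 a natural number. Let F : (P_{≤k}(S))^op → C be the functor sending a subset I ⊆ S with |I| ≤ k to the product ∏_{s∈I} X_s and an inclusion I ⊆ I' to the canonical projection ∏_{s∈I'} X_s → ∏_{s∈I} X_s. Then the cone on F with apex ∏_{s∈S} X_s whose legs are the canonical projections ∏_{s∈S} X_s → ∏_{s∈I} X_s is a limit cone; that is, ∏_{s∈S} X_s is the limit of F. -/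
open CategoryTheory CategoryTheory.Limits

universe v u

/-- The poset `P_{≤k}(S)` of subsets of `S` of cardinality at most `k`, ordered by
inclusion, regarded as a category. -/
abbrev PLE (S : Type) (k : ℕ) : Type := {I : Finset S // I.card ≤ k}

variable {C : Type u} [Category.{v} C]

/-- The functor `(P_{≤k}(S))ᵒᵖ ⥤ C` sending `I` to `∏_{s ∈ I} X s` and an inclusion
`I ⊆ I'` to the canonical projection `∏_{s ∈ I'} X s ⟶ ∏_{s ∈ I} X s`. -/
noncomputable def subProdFunctor (S : Type) (X : S → C) [HasFiniteProducts C] (k : ℕ) :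
    (PLE S k)ᵒᵖ ⥤ C where
  obj I := ∏ᶜ fun s : {x : S // x ∈ I.unop.val} => X s.val
  map {I J} f := Pi.lift fun s : {x : S // x ∈ J.unop.val} =>
    Pi.π (fun s : {x : S // x ∈ I.unop.val} => X s.val) ⟨s.val, leOfHom f.unop s.prop⟩
  map_id I := by
    apply Pi.hom_ext
    intro s
    simp
  map_comp {I J K} f g := by
    apply Pi.hom_ext
    intro s
    simp

/-- The cone on `subProdFunctor` with apex `∏_{s ∈ S} X s` whose legs are the canonical
projections. -/
noncomputable def subProdCone (S : Type) [Fintype S] (X : S → C) [HasFiniteProducts C]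
    (k : ℕ) : Cone (subProdFunctor S X k) where
  pt := ∏ᶜ X
  π :=
    { app := fun I => Pi.lift fun s : {x : S // x ∈ I.unop.val} => Pi.π X s.val
      naturality := by
        intro I J f
        apply Pi.hom_ext
        intro s
        simp [subProdFunctor] }

/-- for a finite family `(X_s)_{s ∈ S}` in a category with finite products
and `k ≥ 1`, the product `∏_{s ∈ S} X s`, with the canonical projections, is the limit of
the functor `I ↦ ∏_{s ∈ I} X s` on the opposite of the poset of subsets of `S` of size at
most `k`. -/
theorem prod_isLimit_of_subProducts (S : Type) [Fintype S] (X : S → C)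
    [HasFiniteProducts C] (k : ℕ) (hk : 1 ≤ k) :
    Nonempty (IsLimit (subProdCone S X k)) := by
  have hsng : ∀ s : S, ({s} : Finset S).card ≤ k := fun s => by simpa using hk
  refine ⟨{
    lift := fun c => Pi.lift fun s : S =>
      c.π.app (Opposite.op ⟨{s}, hsng s⟩) ≫
        Pi.π (fun t : {x : S // x ∈ ({s} : Finset S)} => X t.val)
          ⟨s, Finset.mem_singleton_self s⟩
    fac := ?_
    uniq := ?_ }⟩
  · intro c I
    apply Pi.hom_ext
    intro s
    have hle : (⟨{s.val}, hsng s.val⟩ : PLE S k) ≤ I.unop := by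
      exact Finset.singleton_subset_iff.mpr s.prop
    have := c.w (homOfLE hle).op
    simp only [subProdCone]
    erw [Category.assoc, Pi.lift_π, Pi.lift_π]
    rw [← this]
    erw [Category.assoc]
    simp only [subProdFunctor]
    erw [Pi.lift_π]
  · intro c m hm
    apply Pi.hom_ext
    intro s
    have := hm (Opposite.op ⟨{s}, hsng s⟩)
    simp only [limit.lift_π, Fan.mk_π_app]
    rw [← this]
    erw [Category.assoc, Pi.lift_π]
    rfl
end

section
/- Let p : C ⥤ D be a functor between categories such that for every object c of C and every morphism f : p(c) → d in D there exists a p-cocartesian morphism φ : c → c' with p(φ) = f. Then for every object d of D, the inclusion of the fiber C_d into the comma category C_{/d} admits a left adjoint, which sends an object (c, f : p(c) → d) to the codomain of a p-cocartesian lift of f; in particular this inclusion C_d ↪ C_{/d} is a final functor. -/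
open CategoryTheory

universe v₁ v₂ u₁ u₂

variable {C : Type u₁} [Category.{v₁} C] {D : Type u₂} [Category.{v₂} D]

/-- A morphism `φ : c ⟶ c'` is `p`-cocartesian if for every `ψ : c ⟶ c''` and every
`g : p(c') ⟶ p(c'')` with `p(φ) ≫ g = p(ψ)` there is a unique `χ : c' ⟶ c''` with
`φ ≫ χ = ψ` and `p(χ) = g`. -/
def IsCocart (p : C ⥤ D) {c c' : C} (φ : c ⟶ c') : Prop :=
  ∀ (c'' : C) (ψ : c ⟶ c'') (g : p.obj c' ⟶ p.obj c''),
    p.map φ ≫ g = p.map ψ → ∃! χ : c' ⟶ c'', φ ≫ χ = ψ ∧ p.map χ = g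

/-- The fiber of `p` over `d`, as a full subcategory of the comma category
`C_{/d} = CostructuredArrow p d`: the objects `(c, f : p(c) ⟶ d)` with `p(c) = d` and
`f` the identity. -/
def FiberProp (p : C ⥤ D) (d : D) : CostructuredArrow p d → Prop :=
  fun o => ∃ e : p.obj o.left = d, o.hom = eqToHom e

/-- if `p : C ⥤ D` admits cocartesian lifts of all morphisms, then for
every `d` the inclusion of the fiber `C_d` into the comma category `C_{/d}` admits a left
adjoint, sending `(c, f)` to the codomain of a cocartesian lift of `f`; in particular the
inclusion is a final functor. -/
theorem fiber_inclusion_final (p : C ⥤ D)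
    (hlift : ∀ (c : C) (d : D) (f : p.obj c ⟶ d),
      ∃ (c' : C) (φ : c ⟶ c') (e : p.obj c' = d),
        IsCocart p φ ∧ p.map φ ≫ eqToHom e = f)
    (d : D) :
    (∃ L : CostructuredArrow p d ⥤ ObjectProperty.FullSubcategory (FiberProp p d),
      Nonempty (L ⊣ ObjectProperty.ι (FiberProp p d)) ∧
      ∀ o : CostructuredArrow p d,
        ∃ φ : o.left ⟶ (L.obj o).obj.left,
          IsCocart p φ ∧ p.map φ ≫ (L.obj o).obj.hom = o.hom) ∧
    (ObjectProperty.ι (FiberProp p d)).Final := by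
  classical
  choose c' φ0 e0 hcoc hcomm using hlift
  set G := ObjectProperty.ι (FiberProp p d) with hG
  let Fobj : CostructuredArrow p d → ObjectProperty.FullSubcategory (FiberProp p d) :=
    fun X => ⟨CostructuredArrow.mk (eqToHom (e0 X.left d X.hom)), ⟨e0 X.left d X.hom, rfl⟩⟩
  have key : ∀ (X : CostructuredArrow p d) (Y : ObjectProperty.FullSubcategory (FiberProp p d))
      (k : X ⟶ G.obj Y),
      ∃! χ : (Fobj X).obj.left ⟶ Y.obj.left,
        φ0 X.left d X.hom ≫ χ = k.left ∧
          p.map χ ≫ Y.obj.hom = eqToHom (e0 X.left d X.hom) := by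
    intro X Y k
    obtain ⟨eY, hY⟩ := Y.property
    have hk : p.map k.left ≫ Y.obj.hom = X.hom := CostructuredArrow.w k
    rw [hY] at hk
    have hg : p.map (φ0 X.left d X.hom) ≫
        (eqToHom (e0 X.left d X.hom) ≫ eqToHom eY.symm) = p.map k.left := by
      rw [← Category.assoc, hcomm, ← hk, Category.assoc, eqToHom_trans, eqToHom_refl,
        Category.comp_id]
    obtain ⟨χ, ⟨hχ1, hχ2⟩, huniq⟩ := hcoc X.left d X.hom Y.obj.left k.left _ hg
    refine ⟨χ, ⟨hχ1, ?_⟩, ?_⟩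
    · rw [hχ2, hY]
      simp
    · rintro χ' ⟨h1, h2⟩
      refine huniq χ' ⟨h1, ?_⟩
      rw [hY] at h2
      calc p.map χ' = (p.map χ' ≫ eqToHom eY) ≫ eqToHom eY.symm := by
            rw [Category.assoc, eqToHom_trans, eqToHom_refl, Category.comp_id]
        _ = eqToHom (e0 X.left d X.hom) ≫ eqToHom eY.symm := by rw [h2]
  let equ : ∀ (X : CostructuredArrow p d) (Y : ObjectProperty.FullSubcategory (FiberProp p d)),
      (Fobj X ⟶ Y) ≃ (X ⟶ G.obj Y) := fun X Y =>
    { toFun := fun h => CostructuredArrow.homMk (φ0 X.left d X.hom ≫ h.hom.left) (by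
        have hw : p.map h.hom.left ≫ Y.obj.hom = eqToHom (e0 X.left d X.hom) :=
          CostructuredArrow.w h.hom
        rw [Functor.map_comp, Category.assoc]
        exact (congrArg (p.map (φ0 X.left d X.hom) ≫ ·) hw).trans
          (hcomm X.left d X.hom))
      invFun := fun k =>
        ObjectProperty.homMk (CostructuredArrow.homMk (key X Y k).choose (key X Y k).choose_spec.1.2 :
          (Fobj X).obj ⟶ Y.obj)
      left_inv := fun h => by
        apply InducedCategory.hom_ext
        apply CostructuredArrow.hom_ext
        have hh : p.map h.hom.left ≫ Y.obj.hom = eqToHom (e0 X.left d X.hom) :=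
          CostructuredArrow.w h.hom
        exact ((key X Y _).choose_spec.2 h.hom.left ⟨rfl, hh⟩).symm
      right_inv := fun k => by
        apply CostructuredArrow.hom_ext
        exact (key X Y k).choose_spec.1.1 }
  have he : ∀ (X : CostructuredArrow p d) (Y Y' : ObjectProperty.FullSubcategory (FiberProp p d))
      (g : Y ⟶ Y') (h : Fobj X ⟶ Y), equ X Y' (h ≫ g) = equ X Y h ≫ G.map g := by
    intro X Y Y' g h
    apply CostructuredArrow.hom_ext
    show φ0 X.left d X.hom ≫ (h.hom.left ≫ g.hom.left) = (φ0 X.left d X.hom ≫ h.hom.left) ≫ g.hom.left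
    rw [Category.assoc]
  refine ⟨⟨Adjunction.leftAdjointOfEquiv equ he, ⟨Adjunction.adjunctionOfEquivLeft equ he⟩,
    ?_⟩, ?_⟩
  · intro o
    exact ⟨φ0 o.left d o.hom, hcoc o.left d o.hom, hcomm o.left d o.hom⟩
  · exact Functor.final_of_adjunction (Adjunction.adjunctionOfEquivLeft equ he)
end
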